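/- arXiv:2304.01624 — 12 statements merged into one kernel-verified Lean document; each statement's English description precedes it below -/
import Mathlib

section
/- Let F ∈ ℂ^{n×n}, v ∈ ℂ^n, and let j < n be such that the vectors v, Fv, …, F^j v are linearly independent. Let 𝔮 be a polynomial of degree j whose roots s_1, …, s_j (counted with multiplicity) all lie outside the spectrum of F. Then there exist a matrix Z ∈ ℂ^{n×j}, a row vector h ∈ ℂ^{1×j}, and an upper triangular matrix H ∈ ℂ^{j×j} whose diagonal entries are s_1, …, s_j in this order, such that: (i) the matrix V = [v Z] ∈ ℂ^{n×(j+1)} has full column rank; (ii) F·Z = v·h + Z·H (equivalently, F·V·[0; I_j] = V·[h; H] is a rational Arnoldi decomposition with poles s_1, …, s_j); and (iii) the column span of Z equals the rational Krylov space 𝔮(F)^{-1}·span{v, Fv, …, F^{j−1}v}. -/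
/-!
Let `q = ∏ (X - sᵢ)` and let `t m = ∏_{i ≥ m} (X - sᵢ)` be its tails, so `t 0 = q`, `t j = 1` and
`t m = (X - sₘ) * t (m + 1)`. The vectors `y m = q(F)⁻¹ t m (F) v` satisfy `y 0 = v` and
`(F - sₘ) y (m + 1) = y m`, which is the Arnoldi relation for `Z = [y 1 … y j]` with `h = e₁ᵀ` and
`H = diag s + (ones on the superdiagonal)`.
Since `t m` has degree `j - m`, the tails `t 0, …, t j` span the polynomials of degree `≤ j`, so the
vectors `q(F) y m = t m (F) v` span the `(j+1)`-dimensional Krylov space and are independent; likewise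
`t 1, …, t j` span the polynomials of degree `< j`, so `q(F)` maps the span of `Z` onto `κ_j(F, v)`.
-/

open Matrix Polynomial

variable {K : Type*} [Field K]

section TailProducts

variable {j : ℕ} (s : Fin j → K)

noncomputable def tailProd (m : ℕ) : K[X] :=
  ∏ i ∈ Finset.univ.filter (fun i : Fin j => m ≤ (i : ℕ)), (X - C (s i))

theorem tailProd_zero : tailProd s 0 = ∏ i, (X - C (s i)) := by
  simp [tailProd]

theorem tailProd_eq_X_sub_C_mul (k : Fin j) :
    tailProd s k = (X - C (s k)) * tailProd s (k + 1) := by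
  have hset : Finset.univ.filter (fun i : Fin j => (k : ℕ) ≤ i) =
      insert k (Finset.univ.filter fun i : Fin j => (k : ℕ) + 1 ≤ i) := by
    ext i
    simp only [Finset.mem_filter, Finset.mem_univ, true_and, Finset.mem_insert, Fin.ext_iff]
    omega
  rw [tailProd, hset, Finset.prod_insert (by simp), tailProd]

theorem monic_tailProd (m : ℕ) : (tailProd s m).Monic :=
  monic_prod_of_monic _ _ fun _ _ => monic_X_sub_C _

theorem natDegree_tailProd (m : ℕ) : (tailProd s m).natDegree = j - m := by
  rw [tailProd, natDegree_prod_of_monic _ _ fun _ _ => monic_X_sub_C _]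
  have hsplit := Finset.card_filter_add_card_filter_not
    (s := (Finset.univ : Finset (Fin j))) (fun i : Fin j => m ≤ (i : ℕ))
  simp only [not_le, Fin.card_filter_val_lt, Finset.card_univ, Fintype.card_fin] at hsplit
  simp only [natDegree_X_sub_C, Finset.sum_const, smul_eq_mul, mul_one]
  omega

noncomputable def tailProdSequence : Polynomial.Sequence K where
  elems' i := if i ≤ j then tailProd s (j - i) else X ^ i
  degree_eq' i := by
    split_ifs with hi
    · rw [degree_eq_natDegree (monic_tailProd s _).ne_zero, natDegree_tailProd]
      norm_cast
      omega
    · exact degree_X_pow i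

-- The last `d` tails, of degrees `d - 1, …, 0`.
theorem span_tailProd {d : ℕ} (hd : d ≤ j + 1) :
    Submodule.span K (Set.range fun k : Fin d => tailProd s (j + 1 - d + k)) = degreeLT K d := by
  rw [← (tailProdSequence s).span_degreeLT fun i _ => by
    simp only [tailProdSequence]
    split_ifs
    · rw [(monic_tailProd s _).leadingCoeff]; exact isUnit_one
    · rw [(monic_X_pow i).leadingCoeff]; exact isUnit_one]
  congr 1
  ext p
  simp only [Set.mem_range, Set.mem_image, Set.mem_Iio, tailProdSequence]
  constructor
  · rintro ⟨k, rfl⟩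
    refine ⟨d - 1 - k, by omega, ?_⟩
    rw [if_pos (by omega)]
    congr 1
    omega
  · rintro ⟨i, hi, rfl⟩
    refine ⟨⟨d - 1 - i, by omega⟩, ?_⟩
    rw [if_pos (by omega)]
    congr 1
    simp only
    omega

end TailProducts

section Krylov

variable {ι : Type*} [Fintype ι] [DecidableEq ι] (F : Matrix ι ι K) (v : ι → K)

noncomputable def krylovMap : K[X] →ₗ[K] ι → K where
  toFun p := aeval F p *ᵥ v
  map_add' p q := by simp [add_mulVec]
  map_smul' c p := by simp [smul_mulVec]

theorem krylovMap_apply (p : K[X]) : krylovMap F v p = aeval F p *ᵥ v := rfl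

def krylovSpace (d : ℕ) : Submodule K (ι → K) :=
  Submodule.span K (Set.range fun k : Fin d => (F ^ (k : ℕ)) *ᵥ v)

theorem map_krylovMap_degreeLT (d : ℕ) :
    (degreeLT K d).map (krylovMap F v) = krylovSpace F v d := by
  classical
  rw [degreeLT_eq_span_X_pow, Submodule.map_span, krylovSpace]
  congr 1
  ext w
  simp [krylovMap_apply, Fin.exists_iff]

theorem span_krylovMap_eq_krylovSpace {κ : Type*} {d : ℕ} {p : κ → K[X]}
    (hp : Submodule.span K (Set.range p) = degreeLT K d) :
    Submodule.span K (Set.range fun k => krylovMap F v (p k)) = krylovSpace F v d := by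
  change Submodule.span K (Set.range (krylovMap F v ∘ p)) = _
  rw [Set.range_comp, Submodule.span_image, hp, map_krylovMap_degreeLT]

theorem finrank_krylovSpace {d : ℕ}
    (hindep : LinearIndependent K fun k : Fin d => (F ^ (k : ℕ)) *ᵥ v) :
    Module.finrank K (krylovSpace F v d) = d := by
  rw [krylovSpace, finrank_span_eq_card hindep, Fintype.card_fin]

end Krylov

theorem isUnit_aeval_prod_X_sub_C {A : Type*} [Ring A] [Algebra K A] (a : A) {κ : Type*}
    (t : Finset κ) (s : κ → K) (hs : ∀ i ∈ t, s i ∉ spectrum K a) :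
    IsUnit (aeval a (∏ i ∈ t, (X - C (s i)))) := by
  classical
  induction t using Finset.induction_on with
  | empty => simp
  | insert i t hi ih =>
    rw [Finset.prod_insert hi, map_mul]
    refine IsUnit.mul ?_ (ih fun k hk => hs k (Finset.mem_insert_of_mem hk))
    have hunit := spectrum.notMem_iff.mp (hs i (Finset.mem_insert_self i t))
    simpa [map_sub, aeval_X, aeval_C] using hunit.neg

section RationalKrylov

variable {ι : Type*} [Fintype ι] [DecidableEq ι] (F : Matrix ι ι K) (v : ι → K) {j : ℕ}
  (s : Fin j → K)

noncomputable def ratKrylovVec (m : ℕ) : ι → K :=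
  (aeval F (tailProd s 0))⁻¹ *ᵥ krylovMap F v (tailProd s m)

variable {F s}

theorem aeval_mulVec_ratKrylovVec (hq : IsUnit (aeval F (tailProd s 0))) (m : ℕ) :
    aeval F (tailProd s 0) *ᵥ ratKrylovVec F v s m = krylovMap F v (tailProd s m) := by
  rw [ratKrylovVec, mulVec_mulVec, mul_nonsing_inv _ ((isUnit_iff_isUnit_det _).mp hq),
    one_mulVec]

theorem ratKrylovVec_zero (hq : IsUnit (aeval F (tailProd s 0))) : ratKrylovVec F v s 0 = v :=
  mulVec_injective_iff_isUnit.mpr hq (aeval_mulVec_ratKrylovVec v hq 0)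

theorem mulVec_ratKrylovVec_succ (hq : IsUnit (aeval F (tailProd s 0))) (k : Fin j) :
    F *ᵥ ratKrylovVec F v s (k + 1) = ratKrylovVec F v s k + s k • ratKrylovVec F v s (k + 1) := by
  have hstep : aeval F (X - C (s k)) *ᵥ ratKrylovVec F v s (k + 1) = ratKrylovVec F v s k := by
    apply mulVec_injective_iff_isUnit.mpr hq
    rw [mulVec_mulVec, ← ((Commute.all (X - C (s k)) (tailProd s 0)).map (aeval F)).eq,
      ← mulVec_mulVec, aeval_mulVec_ratKrylovVec v hq, aeval_mulVec_ratKrylovVec v hq, krylovMap_apply,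
      krylovMap_apply, mulVec_mulVec, ← map_mul, ← tailProd_eq_X_sub_C_mul]
  rw [map_sub, aeval_X, aeval_C, Algebra.algebraMap_eq_smul_one, sub_mulVec, smul_mulVec,
    one_mulVec, sub_eq_iff_eq_add] at hstep
  exact hstep

theorem linearIndependent_ratKrylovVec (hq : IsUnit (aeval F (tailProd s 0)))
    (hindep : LinearIndependent K fun k : Fin (j + 1) => (F ^ (k : ℕ)) *ᵥ v) :
    LinearIndependent K fun m : Fin (j + 1) => ratKrylovVec F v s m := by
  have hspan := span_krylovMap_eq_krylovSpace F v (by simpa using span_tailProd s le_rfl)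
  have hu : LinearIndependent K fun m : Fin (j + 1) => krylovMap F v (tailProd s m) := by
    rw [linearIndependent_iff_card_eq_finrank_span, Set.finrank, hspan,
      finrank_krylovSpace F v hindep, Fintype.card_fin]
  refine LinearIndependent.of_comp (mulVecLin (aeval F (tailProd s 0))) ?_
  simpa [Function.comp_def, aeval_mulVec_ratKrylovVec v hq] using hu

theorem span_ratKrylovVec_succ (hq : IsUnit (aeval F (tailProd s 0))) :
    Submodule.span K (Set.range fun k : Fin j => ratKrylovVec F v s (k + 1)) =
      (krylovSpace F v j).comap (mulVecLin (aeval F (tailProd s 0))) := by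
  have hspan := span_krylovMap_eq_krylovSpace F v
    (by simpa [add_comm] using span_tailProd s (Nat.le_succ j))
  have hinj : Function.Injective (mulVecLin (aeval F (tailProd s 0))) :=
    mulVec_injective_iff_isUnit.mpr hq
  rw [← hspan, ← Submodule.comap_map_eq_of_injective hinj (Submodule.span K _),
    Submodule.map_span, ← Set.range_comp]
  simp [Function.comp_def, aeval_mulVec_ratKrylovVec v hq]

end RationalKrylov

section ArnoldiRelation

variable {ι : Type*} {j : ℕ}

variable (K) in
def shiftMatrix (j : ℕ) : Matrix (Fin j) (Fin j) K := of fun a b => if (a : ℕ) + 1 = b then 1 else 0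

def poleBidiagonal (s : Fin j → K) : Matrix (Fin j) (Fin j) K := diagonal s + shiftMatrix K j

theorem poleBidiagonal_apply_of_lt (s : Fin j → K) {a b : Fin j} (hba : b < a) :
    poleBidiagonal s a b = 0 := by
  have hba' : (b : ℕ) < a := hba
  simp [poleBidiagonal, shiftMatrix, diagonal_apply_ne _ (ne_of_gt hba),
    show (a : ℕ) + 1 ≠ b by omega]

theorem poleBidiagonal_apply_self (s : Fin j → K) (a : Fin j) : poleBidiagonal s a a = s a := by
  simp [poleBidiagonal, shiftMatrix]

variable (K) in
def firstUnitRow (j : ℕ) : Matrix (Fin 1) (Fin j) K := of fun _ k => if (k : ℕ) = 0 then 1 else 0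

theorem col_mul_firstUnitRow_add_mul_shiftMatrix (y : ℕ → ι → K) :
    of (fun i (_ : Fin 1) => y 0 i) * firstUnitRow K j +
      of (fun i (k : Fin j) => y (k + 1) i) * shiftMatrix K j = of fun i (k : Fin j) => y k i := by
  ext i ⟨_ | t, hk⟩
  · simp [mul_apply, firstUnitRow, shiftMatrix]
  · simp only [Matrix.add_apply, mul_apply, of_apply, firstUnitRow, shiftMatrix, mul_ite, mul_one,
      mul_zero]
    rw [Finset.sum_eq_single (⟨t, by omega⟩ : Fin j)] <;> simp_all [Fin.ext_iff]

theorem arnoldi_relation_of_mulVec_succ [Fintype ι] (F : Matrix ι ι K) (s : Fin j → K)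
    {y : ℕ → ι → K} (hy : ∀ k : Fin j, F *ᵥ y (k + 1) = y k + s k • y (k + 1)) :
    F * of (fun i (k : Fin j) => y (k + 1) i) =
      of (fun i (_ : Fin 1) => y 0 i) * firstUnitRow K j +
        of (fun i (k : Fin j) => y (k + 1) i) * poleBidiagonal s := by
  rw [poleBidiagonal, Matrix.mul_add, add_left_comm, col_mul_firstUnitRow_add_mul_shiftMatrix]
  ext i k
  have hyk := congrFun (hy k) i
  simp only [mulVec, dotProduct, Pi.add_apply, Pi.smul_apply, smul_eq_mul] at hyk
  rw [Matrix.add_apply, mul_diagonal, mul_apply]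
  simp only [of_apply, hyk]
  ring

theorem linearIndependent_fromCols_of_succ {y : ℕ → ι → K}
    (hy : LinearIndependent K fun m : Fin (j + 1) => y m) :
    LinearIndependent K fun c : Fin 1 ⊕ Fin j =>
      (fromCols (of fun i (_ : Fin 1) => y 0 i) (of fun i (k : Fin j) => y (k + 1) i))ᵀ c := by
  have hcols : (fun c : Fin 1 ⊕ Fin j =>
      (fromCols (of fun i (_ : Fin 1) => y 0 i) (of fun i (k : Fin j) => y (k + 1) i))ᵀ c) =
      (fun m : Fin (j + 1) => y m) ∘ Sum.elim (fun _ => 0) Fin.succ := by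
    funext c i
    rcases c with c | k <;> rfl
  rw [hcols]
  exact hy.comp _ (Function.Injective.sumElim (fun _ _ _ => Subsingleton.elim _ _)
    (Fin.succ_injective j) fun _ k => (Fin.succ_ne_zero k).symm)

end ArnoldiRelation

theorem stmt0_general (n j : ℕ)
    (F : Matrix (Fin n) (Fin n) ℂ) (v : Fin n → ℂ)
    (hindep : LinearIndependent ℂ (fun k : Fin (j + 1) => (F ^ (k : ℕ)) *ᵥ v))
    (s : Fin j → ℂ) (hs : ∀ i, s i ∉ spectrum ℂ F) :
    ∃ (Z : Matrix (Fin n) (Fin j) ℂ) (h : Matrix (Fin 1) (Fin j) ℂ)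
      (H : Matrix (Fin j) (Fin j) ℂ),
      (∀ i k : Fin j, k < i → H i k = 0) ∧ (∀ i : Fin j, H i i = s i) ∧
      LinearIndependent ℂ
        (fun c : Fin 1 ⊕ Fin j =>
          (fromCols (Matrix.of fun i (_ : Fin 1) => v i) Z)ᵀ c) ∧
      F * Z = (Matrix.of fun i (_ : Fin 1) => v i) * h + Z * H ∧
      Submodule.span ℂ (Set.range fun k : Fin j => Zᵀ k) =
        Submodule.comap
          (Matrix.mulVecLin (aeval F (∏ i : Fin j, (X - Polynomial.C (s i)))))
          (Submodule.span ℂ (Set.range fun k : Fin j => (F ^ (k : ℕ)) *ᵥ v)) := by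
  have hq : IsUnit (aeval F (tailProd s 0)) := by
    rw [tailProd_zero]
    exact isUnit_aeval_prod_X_sub_C F _ s fun i _ => hs i
  have hv : (of fun i (_ : Fin 1) => v i) = of fun i (_ : Fin 1) => ratKrylovVec F v s 0 i := by
    rw [ratKrylovVec_zero v hq]
  refine ⟨of fun i k => ratKrylovVec F v s (k + 1) i, firstUnitRow ℂ j, poleBidiagonal s,
    fun _ _ => poleBidiagonal_apply_of_lt s, poleBidiagonal_apply_self s, ?_, ?_, ?_⟩
  · rw [hv]
    exact linearIndependent_fromCols_of_succ (linearIndependent_ratKrylovVec v hq hindep)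
  · rw [hv]
    exact arnoldi_relation_of_mulVec_succ F s (mulVec_ratKrylovVec_succ v hq)
  · rw [← tailProd_zero]
    exact span_ratKrylovVec_succ v hq

/-- Existence of a rational Arnoldi decomposition in special form:
`F·Z = v·h + Z·H` with `H` upper triangular having the poles `s₁,…,s_j` on its
diagonal, `[v Z]` of full column rank, and the columns of `Z` spanning the
rational Krylov space `𝔮(F)⁻¹·span{v, Fv, …, F^{j-1}v}`. -/
theorem stmt0 (n j : ℕ) (hj : j < n)
    (F : Matrix (Fin n) (Fin n) ℂ) (v : Fin n → ℂ)
    (hindep : LinearIndependent ℂ (fun k : Fin (j + 1) => (F ^ (k : ℕ)) *ᵥ v))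
    (s : Fin j → ℂ) (hs : ∀ i, s i ∉ spectrum ℂ F) :
    ∃ (Z : Matrix (Fin n) (Fin j) ℂ) (h : Matrix (Fin 1) (Fin j) ℂ)
      (H : Matrix (Fin j) (Fin j) ℂ),
      (∀ i k : Fin j, k < i → H i k = 0) ∧ (∀ i : Fin j, H i i = s i) ∧
      LinearIndependent ℂ
        (fun c : Fin 1 ⊕ Fin j =>
          (fromCols (Matrix.of fun i (_ : Fin 1) => v i) Z)ᵀ c) ∧
      F * Z = (Matrix.of fun i (_ : Fin 1) => v i) * h + Z * H ∧
      Submodule.span ℂ (Set.range fun k : Fin j => Zᵀ k) =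
        Submodule.comap
          (Matrix.mulVecLin (aeval F (∏ i : Fin j, (X - Polynomial.C (s i)))))
          (Submodule.span ℂ (Set.range fun k : Fin j => (F ^ (k : ℕ)) *ᵥ v)) :=
  stmt0_general n j F v hindep s hs
end

section
/- Let F ∈ ℂ^{n×n}, v ∈ ℂ^n, and let j < n be such that the vectors v, Fv, …, F^j v are linearly independent. Let 𝔮 be a polynomial of degree j such that 𝔮(F) is invertible. Then v does not belong to the rational Krylov subspace 𝔮(F)^{-1}·span{v, Fv, …, F^{j−1}v}. -/
open Matrix Polynomial

/-!
`v ∈ 𝔮(F)⁻¹ κ_j` means `𝔮(F) v = ∑_{i ≤ j} 𝔮_i F^i v ∈ span{v, …, F^{j-1} v}`.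
Since `𝔮_j ≠ 0`, subtracting the lower terms would put `F^j v` in that span,
against linear independence.
-/

theorem Matrix.aeval_mulVec_eq_sum_fin {ι R : Type*} [Fintype ι] [DecidableEq ι] [CommRing R]
    (F : Matrix ι ι R) (v : ι → R) {p : R[X]} {d : ℕ} (hp : p.natDegree < d) :
    aeval F p *ᵥ v = ∑ i : Fin d, p.coeff i • (F ^ (i : ℕ) *ᵥ v) := by
  rw [aeval_eq_sum_range' hp, sum_mulVec, Finset.sum_range]
  simp only [smul_mulVec]

theorem LinearIndependent.sum_smul_notMem_span_init {K V : Type*} [DivisionRing K]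
    [AddCommGroup V] [Module K V] {j : ℕ} {w : Fin (j + 1) → V} (hw : LinearIndependent K w)
    {c : Fin (j + 1) → K} (hc : c (Fin.last j) ≠ 0) :
    ∑ i, c i • w i ∉ Submodule.span K (Set.range (Fin.init w)) := by
  intro hmem
  have hinit :
      ∑ i : Fin j, c i.castSucc • w i.castSucc ∈ Submodule.span K (Set.range (Fin.init w)) :=
    Submodule.sum_mem _ fun i _ => Submodule.smul_mem _ _ (Submodule.subset_span ⟨i, rfl⟩)
  rw [Fin.sum_univ_castSucc] at hmem
  have hlast := Submodule.sub_mem _ hmem hinit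
  rw [add_sub_cancel_left, Submodule.smul_mem_iff _ hc] at hlast
  exact (linearIndependent_finSucc'.1 hw).2 hlast

theorem stmt1_general (n j : ℕ)
    (F : Matrix (Fin n) (Fin n) ℂ) (v : Fin n → ℂ)
    (hindep : LinearIndependent ℂ (fun k : Fin (j + 1) => (F ^ (k : ℕ)) *ᵥ v))
    (𝔮 : Polynomial ℂ) (hdeg : 𝔮.degree = j) :
    v ∉ Submodule.comap (Matrix.mulVecLin (aeval F 𝔮))
        (Submodule.span ℂ (Set.range fun k : Fin j => (F ^ (k : ℕ)) *ᵥ v)) := by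
  have hnat : 𝔮.natDegree = j := natDegree_eq_of_degree_eq_some hdeg
  have hlead : 𝔮.coeff j ≠ 0 := by
    rw [← hnat, coeff_natDegree, ne_eq, leadingCoeff_eq_zero]
    rintro rfl
    simp at hdeg
  have hlt : 𝔮.natDegree < j + 1 := by omega
  rw [Submodule.mem_comap, mulVecLin_apply, aeval_mulVec_eq_sum_fin F v hlt]
  exact hindep.sum_smul_notMem_span_init (c := fun i => 𝔮.coeff i) hlead

/-- If `v, Fv, …, F^j v` are linearly independent and `𝔮` is a degree-`j`
polynomial with `𝔮(F)` invertible, then `v` does not lie in the rational Krylov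
subspace `𝔮(F)⁻¹·span{v, Fv, …, F^{j-1}v}`. -/
theorem stmt1 (n j : ℕ) (hj : j < n)
    (F : Matrix (Fin n) (Fin n) ℂ) (v : Fin n → ℂ)
    (hindep : LinearIndependent ℂ (fun k : Fin (j + 1) => (F ^ (k : ℕ)) *ᵥ v))
    (𝔮 : Polynomial ℂ) (hdeg : 𝔮.degree = j) (hunit : IsUnit (aeval F 𝔮)) :
    v ∉ Submodule.comap (Matrix.mulVecLin (aeval F 𝔮))
        (Submodule.span ℂ (Set.range fun k : Fin j => (F ^ (k : ℕ)) *ᵥ v)) :=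
  stmt1_general n j F v hindep 𝔮 hdeg
end

section
/- Let F ∈ ℂ^{n×n}, 𝐯 ∈ ℂ^{n×p}, Z ∈ ℂ^{n×q} with Z of full column rank, h ∈ ℂ^{p×q} and H ∈ ℂ^{q×q}, and suppose F·Z = 𝐯·h + Z·H. If z ∈ ℂ^q is nonzero, H·z = s·z for some s ∈ ℂ, and s is not an eigenvalue of F, then h·z ≠ 0. (In particular, if no eigenvalue of H is an eigenvalue of F, the pair (h, H) is observable.) -/
/-!
If `h z = 0` for an eigenvector `z` of `H`, the decomposition `F Z = V h + Z H` makes `Z z` an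
eigenvector of `F` for the same eigenvalue `s`, or zero. As `s` is not an eigenvalue of `F`,
`Z z = 0`, and the full column rank of `Z` forces `z = 0`.
-/

open Matrix

namespace Matrix

variable {R : Type*} [CommRing R] {m : Type*} [Fintype m]

theorem eq_zero_of_mulVec_eq_smul_of_notMem_spectrum [DecidableEq m] {A : Matrix m m R} {μ : R}
    (hμ : μ ∉ spectrum R A) {x : m → R} (hx : A *ᵥ x = μ • x) : x = 0 := by
  by_contra hx0
  have hev : Module.End.HasEigenvector (toLin' A) μ x := ⟨Module.End.mem_eigenspace_iff.mpr hx, hx0⟩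
  exact hμ (spectrum_toLin' A ▸ (Module.End.hasEigenvalue_of_hasEigenvector hev).mem_spectrum)

theorem mulVec_mulVec_eq_smul_of_mul_eq_add_mul {k l : Type*} [Fintype k] [Fintype l]
    {F : Matrix m m R} {V : Matrix m k R} {Z : Matrix m l R} {h : Matrix k l R}
    {H : Matrix l l R} (hFZ : F * Z = V * h + Z * H) {z : l → R} {s : R}
    (hHz : H *ᵥ z = s • z) (hhz : h *ᵥ z = 0) : F *ᵥ (Z *ᵥ z) = s • (Z *ᵥ z) := by
  rw [mulVec_mulVec, hFZ, add_mulVec, ← mulVec_mulVec, ← mulVec_mulVec, hhz, mulVec_zero,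
    zero_add, hHz, mulVec_smul]

end Matrix

/-- From a (block) rational Arnoldi decomposition `F·Z = V·h + Z·H` with `Z`
of full column rank: any eigenvector `z` of `H` whose eigenvalue `s` is not an
eigenvalue of `F` satisfies `h·z ≠ 0` (observability of the pair `(h, H)`). -/
theorem stmt2 (n p q : ℕ)
    (F : Matrix (Fin n) (Fin n) ℂ) (V : Matrix (Fin n) (Fin p) ℂ)
    (Z : Matrix (Fin n) (Fin q) ℂ)
    (hZ : LinearIndependent ℂ (fun c : Fin q => Zᵀ c))
    (h : Matrix (Fin p) (Fin q) ℂ) (H : Matrix (Fin q) (Fin q) ℂ)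
    (hbrad : F * Z = V * h + Z * H)
    (z : Fin q → ℂ) (hz : z ≠ 0) (s : ℂ) (hev : H *ᵥ z = s • z)
    (hs : s ∉ spectrum ℂ F) :
    h *ᵥ z ≠ 0 := by
  intro hhz
  have hZz : Z *ᵥ z = 0 :=
    eq_zero_of_mulVec_eq_smul_of_notMem_spectrum hs
      (mulVec_mulVec_eq_smul_of_mul_eq_add_mul hbrad hev hhz)
  exact hz (mulVec_injective_iff.mpr hZ (by rw [hZz, mulVec_zero]))
end

section
/- Let F ∈ ℂ^{n×n}, v ∈ ℂ^n, Z ∈ ℂ^{n×j}, h ∈ ℂ^{1×j} and let H ∈ ℂ^{j×j} be upper triangular with diagonal entries s_1, …, s_j. Assume: the matrix [v Z] ∈ ℂ^{n×(j+1)} has full column rank; F·Z = v·h + Z·H; every s_i has positive real part; and no s_i is an eigenvalue of F. Then, for any B ∈ ℂ^{n×m}, the Lyapunov equation Ỹ·H + Hᴴ·Ỹ − (Zᴴ B Bᴴ Z + hᴴ h) = 0 has a unique Hermitian solution Ỹ ∈ ℂ^{j×j}, and this solution is positive definite. -/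
/-!
The Cayley transform `C = (H - 1)(H + 1)⁻¹` maps the spectrum of `H`, which lies in the open
right half-plane, into the open unit disc, so `Cᴺ → 0` by Gelfand's formula. It turns
`X H + Hᴴ X = Q` into the Stein equation `X = Cᴴ X C + R` with `R = 2 (H + 1)⁻ᴴ Q (H + 1)⁻¹`,
and iterating gives `X = (Cᴺ)ᴴ X Cᴺ + ∑_{k<N} (Cᵏ)ᴴ R Cᵏ`. Letting `N → ∞`, the Lyapunov map
`X ↦ X H + Hᴴ X` is injective, hence bijective, and its solution is positive semidefinite when
`Q = Sᴴ S` is. The kernel of the solution is `H`-invariant and contained in `ker S`, so otherwise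
it would contain an eigenvector `w` of `H` with `h w = 0`; then `F (Z w) = sᵢ (Z w)` with
`Z w ≠ 0`, contradicting `sᵢ ∉ σ(F)`.
-/

open Matrix Filter Topology
open scoped ComplexOrder

theorem tendsto_pow_atTop_nhds_zero_of_forall_norm_lt_one {A : Type*} [NormedRing A]
    [NormedAlgebra ℂ A] [CompleteSpace A] {a : A} (ha : ∀ μ ∈ spectrum ℂ a, ‖μ‖ < 1) :
    Tendsto (a ^ ·) atTop (𝓝 0) := by
  cases subsingleton_or_nontrivial A
  · simp [Subsingleton.elim _ (0 : A)]
  obtain ⟨q, hρq, hq1⟩ := ENNReal.lt_iff_exists_nnreal_btwn.mp <|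
    spectrum.spectralRadius_lt_of_forall_lt a (r := 1) fun μ hμ => by
      simpa [← NNReal.coe_lt_coe] using ha μ hμ
  have hbound : ∀ᶠ n : ℕ in atTop, ‖a ^ n‖₊ ≤ q ^ n := by
    filter_upwards [(spectrum.pow_nnnorm_pow_one_div_tendsto_nhds_spectralRadius a).eventually
      (gt_mem_nhds hρq), eventually_ne_atTop 0] with n hn hn0
    rw [one_div, ENNReal.rpow_inv_lt_iff (by positivity)] at hn
    exact_mod_cast hn.le
  exact squeeze_zero_norm' (by simpa [← NNReal.coe_le_coe] using hbound)
    (tendsto_pow_atTop_nhds_zero_of_lt_one q.2 (by exact_mod_cast hq1))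

theorem Complex.norm_lt_one_of_sub_one_eq_mul_add_one {z μ : ℂ} (hz : 0 < z.re)
    (h : z - 1 = μ * (z + 1)) : ‖μ‖ < 1 := by
  have hlt : ‖z - 1‖ < ‖z + 1‖ := by
    rw [← sq_lt_sq₀ (norm_nonneg _) (norm_nonneg _), Complex.sq_norm, Complex.sq_norm,
      Complex.normSq_apply, Complex.normSq_apply]
    simp only [Complex.sub_re, Complex.add_re, Complex.one_re, Complex.sub_im, Complex.add_im,
      Complex.one_im]
    nlinarith
  have hpos : 0 < ‖z + 1‖ := (norm_nonneg _).trans_lt hlt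
  rw [h, norm_mul] at hlt
  exact (mul_lt_iff_lt_one_left hpos).mp hlt

namespace Matrix

variable {ι : Type*} [Fintype ι]

section Spectrum

variable {K : Type*} [Field K]

theorem mem_spectrum_iff_exists_mulVec_eq_smul [DecidableEq ι] {A : Matrix ι ι K} {μ : K} :
    μ ∈ spectrum K A ↔ ∃ w ≠ 0, A *ᵥ w = μ • w := by
  rw [spectrum.mem_iff, isUnit_iff_isUnit_det, isUnit_iff_ne_zero, not_not,
    ← exists_mulVec_eq_zero_iff]
  simp [sub_mulVec, Algebra.algebraMap_eq_smul_one, smul_mulVec, sub_eq_zero, eq_comm]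

theorem IsUpperTriangular.mem_spectrum_iff [DecidableEq ι] [LinearOrder ι] {A : Matrix ι ι K}
    (hA : A.IsUpperTriangular) {μ : K} : μ ∈ spectrum K A ↔ ∃ i, A i i = μ := by
  rw [mem_spectrum_iff_isRoot_charpoly, charpoly_of_isUpperTriangular A hA, Polynomial.IsRoot,
    Polynomial.eval_prod, Finset.prod_eq_zero_iff]
  simp [sub_eq_zero, eq_comm]

theorem exists_mulVec_eq_smul_of_mapsTo [IsAlgClosed K] {A : Matrix ι ι K}
    {p : Submodule K (ι → K)} (hp : p ≠ ⊥) (hA : ∀ w ∈ p, A *ᵥ w ∈ p) :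
    ∃ w ∈ p, w ≠ 0 ∧ ∃ μ : K, A *ᵥ w = μ • w := by
  have : Nontrivial p := Submodule.nontrivial_iff_ne_bot.mpr hp
  obtain ⟨μ, hμ⟩ := Module.End.exists_eigenvalue (A.mulVecLin.restrict hA)
  obtain ⟨⟨w, hwp⟩, hw⟩ := hμ.exists_hasEigenvector
  exact ⟨w, hwp, fun h => hw.2 (by simp [h]), μ, congrArg Subtype.val hw.apply_eq_smul⟩

theorem mem_spectrum_of_mul_eq_add_mul {κ l : Type*} [Fintype κ] [DecidableEq κ] [Fintype l]
    {F : Matrix κ κ K} {Z : Matrix κ ι K} {V : Matrix κ l K} {h : Matrix l ι K}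
    {H : Matrix ι ι K} (hZ : Function.Injective Z.mulVec) (hFZ : F * Z = V * h + Z * H)
    {w : ι → K} {μ : K} (hw0 : w ≠ 0) (hw : H *ᵥ w = μ • w) (hhw : h *ᵥ w = 0) :
    μ ∈ spectrum K F := by
  refine mem_spectrum_iff_exists_mulVec_eq_smul.mpr ⟨Z *ᵥ w, fun h => hw0 (hZ ?_), ?_⟩
  · rw [h, mulVec_zero]
  · rw [mulVec_mulVec, hFZ, add_mulVec, ← mulVec_mulVec, hhw, mulVec_zero, zero_add,
      ← mulVec_mulVec, hw, mulVec_smul]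

end Spectrum

theorem injective_mulVec_of_injective_fromCols_mulVec {R : Type*} [Semiring R]
    {m n₁ n₂ : Type*} [Fintype n₁] [Fintype n₂] {A : Matrix m n₁ R} {B : Matrix m n₂ R}
    (h : Function.Injective (fromCols A B).mulVec) : Function.Injective B.mulVec :=
  fun w w' hww' => Sum.elim_injective' (f := (0 : n₁ → R)) (h (by simp [hww']))

theorem conjTranspose_fromRows_mul_fromRows {R : Type*} [Semiring R] [StarRing R]
    {m₁ m₂ n : Type*} [Fintype m₁] [Fintype m₂] (A : Matrix m₁ n R) (B : Matrix m₂ n R) :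
    (fromRows A B)ᴴ * fromRows A B = Aᴴ * A + Bᴴ * B := by
  rw [conjTranspose_fromRows_eq_fromCols_conjTranspose, fromCols_mul_fromRows]

section Stein

variable [DecidableEq ι]

theorem eq_pow_conjTranspose_mul_mul_pow_add_sum {R : Type*} [CommRing R] [StarRing R]
    {C X Q : Matrix ι ι R} (h : X = Cᴴ * X * C + Q) (N : ℕ) :
    X = (C ^ N)ᴴ * X * C ^ N + ∑ k ∈ Finset.range N, (C ^ k)ᴴ * Q * C ^ k := by
  induction N with
  | zero => simp
  | succ N ih =>
    conv_lhs => rw [ih]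
    conv_lhs => enter [1, 1, 2]; rw [h]
    rw [Finset.sum_range_succ, pow_succ', conjTranspose_mul]
    simp only [Matrix.mul_add, Matrix.add_mul, Matrix.mul_assoc]
    abel

variable {C : Matrix ι ι ℂ} (hC : Tendsto (C ^ ·) atTop (𝓝 0))
include hC

theorem tendsto_pow_conjTranspose_mul_mul_pow (X : Matrix ι ι ℂ) :
    Tendsto (fun N => (C ^ N)ᴴ * X * C ^ N) atTop (𝓝 0) := by
  have hcont : Continuous fun M : Matrix ι ι ℂ => Mᴴ * X * M := by fun_prop
  have := (hcont.tendsto 0).comp hC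
  rwa [conjTranspose_zero, Matrix.zero_mul, Matrix.zero_mul] at this

theorem eq_zero_of_eq_conjTranspose_mul_mul {X : Matrix ι ι ℂ} (h : X = Cᴴ * X * C) :
    X = 0 := by
  have hconst (N : ℕ) : X = (C ^ N)ᴴ * X * C ^ N := by
    simpa only [Matrix.mul_zero, Matrix.zero_mul, Finset.sum_const_zero, add_zero] using
      eq_pow_conjTranspose_mul_mul_pow_add_sum (h.trans (add_zero _).symm) N
  exact tendsto_nhds_unique (tendsto_const_nhds.congr hconst)
    (tendsto_pow_conjTranspose_mul_mul_pow hC X)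

theorem posSemidef_of_eq_conjTranspose_mul_mul_add {X Q : Matrix ι ι ℂ} (hX : X.IsHermitian)
    (hQ : Q.PosSemidef) (h : X = Cᴴ * X * C + Q) : X.PosSemidef := by
  refine PosSemidef.of_dotProduct_mulVec_nonneg hX fun x => ?_
  have hcont : Continuous fun M : Matrix ι ι ℂ => star x ⬝ᵥ (X - M) *ᵥ x := by fun_prop
  have hlim := (hcont.tendsto 0).comp (tendsto_pow_conjTranspose_mul_mul_pow hC X)
  rw [sub_zero] at hlim
  refine ge_of_tendsto' hlim fun N => ?_
  rw [Function.comp_apply, sub_eq_of_eq_add' (eq_pow_conjTranspose_mul_mul_pow_add_sum h N)]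
  exact (posSemidef_sum _ fun k _ => hQ.conjTranspose_mul_mul_same _).dotProduct_mulVec_nonneg x

end Stein

section Cayley

variable [DecidableEq ι]

noncomputable def cayley (H : Matrix ι ι ℂ) : Matrix ι ι ℂ := (H - 1) * (H + 1)⁻¹

variable {H : Matrix ι ι ℂ}

theorem isUnit_det_add_one_of_re_pos (hH : ∀ μ ∈ spectrum ℂ H, 0 < μ.re) :
    IsUnit (H + 1).det := by
  have h : (-1 : ℂ) ∉ spectrum ℂ H := fun h => absurd (hH _ h) (by norm_num)
  rw [spectrum.notMem_iff, map_neg, map_one, ← neg_add', IsUnit.neg_iff, add_comm] at h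
  exact (isUnit_iff_isUnit_det _).mp h

theorem norm_lt_one_of_mem_spectrum_cayley (hH : ∀ μ ∈ spectrum ℂ H, 0 < μ.re) :
    ∀ μ ∈ spectrum ℂ (cayley H), ‖μ‖ < 1 := by
  intro μ hμ
  obtain ⟨u, hu0, hu⟩ := mem_spectrum_iff_exists_mulVec_eq_smul.mp hμ
  set w := (H + 1)⁻¹ *ᵥ u
  have hwu : (H + 1) *ᵥ w = u := by
    rw [mulVec_mulVec, mul_nonsing_inv _ (isUnit_det_add_one_of_re_pos hH), one_mulVec]
  have hw : (1 - μ) • H *ᵥ w = (1 + μ) • w := by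
    have : (H - 1) *ᵥ w = μ • ((H + 1) *ᵥ w) := by
      rw [hwu, ← hu, cayley, ← mulVec_mulVec]
    rw [sub_mulVec, add_mulVec, one_mulVec, smul_add] at this
    rw [sub_smul, add_smul, one_smul, one_smul]
    linear_combination this
  have hw0 : w ≠ 0 := fun h => hu0 (by rw [← hwu, h, mulVec_zero])
  have hμ1 : 1 - μ ≠ 0 := by
    intro h
    rw [h, zero_smul, eq_comm, smul_eq_zero] at hw
    exact hw0 (hw.resolve_left (by rw [show μ = 1 by linear_combination -h]; norm_num))
  refine Complex.norm_lt_one_of_sub_one_eq_mul_add_one (z := (1 + μ) / (1 - μ))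
    (hH _ (mem_spectrum_iff_exists_mulVec_eq_smul.mpr ⟨w, hw0, ?_⟩)) (by field_simp; ring)
  rw [div_eq_inv_mul, mul_smul, ← hw, smul_smul, inv_mul_cancel₀ hμ1, one_smul]

theorem tendsto_cayley_pow (hH : ∀ μ ∈ spectrum ℂ H, 0 < μ.re) :
    Tendsto (cayley H ^ ·) atTop (𝓝 0) := by
  -- any Banach algebra norm on matrices induces their usual topology
  let _ := Matrix.linftyOpNormedRing (n := ι) (α := ℂ)
  let _ := Matrix.linftyOpNormedAlgebra (R := ℂ) (n := ι) (α := ℂ)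
  exact tendsto_pow_atTop_nhds_zero_of_forall_norm_lt_one
    (norm_lt_one_of_mem_spectrum_cayley hH)

end Cayley

section Lyapunov

def lyapunovMap (H : Matrix ι ι ℂ) : Matrix ι ι ℂ →ₗ[ℂ] Matrix ι ι ℂ :=
  LinearMap.mulRight ℂ H + LinearMap.mulLeft ℂ Hᴴ

theorem lyapunovMap_apply (H X : Matrix ι ι ℂ) : lyapunovMap H X = X * H + Hᴴ * X := rfl

theorem lyapunovMap_conjTranspose (H X : Matrix ι ι ℂ) :
    lyapunovMap H Xᴴ = (lyapunovMap H X)ᴴ := by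
  simp only [lyapunovMap_apply, conjTranspose_add, conjTranspose_mul,
    conjTranspose_conjTranspose, add_comm]

variable {H : Matrix ι ι ℂ}

theorem mulVec_eq_zero_of_mulVec_eq_zero_of_posSemidef_lyapunovMap {X : Matrix ι ι ℂ}
    (hX : X.IsHermitian) (hQ : (lyapunovMap H X).PosSemidef) {x : ι → ℂ} (hx : X *ᵥ x = 0) :
    lyapunovMap H X *ᵥ x = 0 ∧ X *ᵥ (H *ᵥ x) = 0 := by
  have hxX : star x ᵥ* X = 0 := by
    rw [← hX.eq, ← star_mulVec, hx, star_zero]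
  have hQx : lyapunovMap H X *ᵥ x = 0 := by
    rw [← hQ.dotProduct_mulVec_zero_iff, lyapunovMap_apply, add_mulVec, ← mulVec_mulVec,
      ← mulVec_mulVec, hx, mulVec_zero, add_zero, dotProduct_mulVec, hxX, zero_dotProduct]
  refine ⟨hQx, ?_⟩
  rwa [lyapunovMap_apply, add_mulVec, ← mulVec_mulVec, ← mulVec_mulVec, hx, mulVec_zero,
    add_zero] at hQx

variable [DecidableEq ι]

theorem eq_cayley_conjTranspose_mul_mul_cayley_add (hH : IsUnit (H + 1).det)
    (X : Matrix ι ι ℂ) :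
    X = (cayley H)ᴴ * X * cayley H + 2 • ((H + 1)⁻¹ᴴ * lyapunovMap H X * (H + 1)⁻¹) := by
  have key : (H + 1)ᴴ * X * (H + 1) = (H - 1)ᴴ * X * (H - 1) + 2 • lyapunovMap H X := by
    simp only [lyapunovMap_apply, conjTranspose_add, conjTranspose_sub, conjTranspose_one]
    noncomm_ring
  have hinv : (H + 1)⁻¹ᴴ * (H + 1)ᴴ = 1 := by
    rw [← conjTranspose_mul, mul_nonsing_inv _ hH, conjTranspose_one]
  calc X = (H + 1)⁻¹ᴴ * ((H + 1)ᴴ * X * (H + 1)) * (H + 1)⁻¹ := by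
        rw [← Matrix.mul_assoc, ← Matrix.mul_assoc, hinv, Matrix.one_mul,
          mul_nonsing_inv_cancel_right _ _ hH]
    _ = _ := by
        rw [key, cayley, conjTranspose_mul]
        simp only [Matrix.mul_add, Matrix.add_mul, Matrix.mul_smul, Matrix.smul_mul,
          Matrix.mul_assoc]

variable (hH : ∀ μ ∈ spectrum ℂ H, 0 < μ.re)
include hH

theorem lyapunovMap_injective : Function.Injective (lyapunovMap H) := by
  refine (injective_iff_map_eq_zero _).mpr fun X hX => ?_
  refine eq_zero_of_eq_conjTranspose_mul_mul (tendsto_cayley_pow hH) ?_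
  simpa [hX] using eq_cayley_conjTranspose_mul_mul_cayley_add (isUnit_det_add_one_of_re_pos hH) X

theorem lyapunovMap_bijective : Function.Bijective (lyapunovMap H) :=
  ⟨lyapunovMap_injective hH, LinearMap.injective_iff_surjective.mp (lyapunovMap_injective hH)⟩

theorem isHermitian_of_isHermitian_lyapunovMap {X : Matrix ι ι ℂ}
    (hX : (lyapunovMap H X).IsHermitian) : X.IsHermitian :=
  lyapunovMap_injective hH (by rw [lyapunovMap_conjTranspose, hX.eq])

theorem posSemidef_of_posSemidef_lyapunovMap {X : Matrix ι ι ℂ}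
    (hX : (lyapunovMap H X).PosSemidef) : X.PosSemidef :=
  posSemidef_of_eq_conjTranspose_mul_mul_add (tendsto_cayley_pow hH)
    (isHermitian_of_isHermitian_lyapunovMap hH hX.isHermitian)
    ((hX.conjTranspose_mul_mul_same _).smul zero_le_two)
    (eq_cayley_conjTranspose_mul_mul_cayley_add (isUnit_det_add_one_of_re_pos hH) X)

theorem posDef_of_posSemidef_lyapunovMap {X : Matrix ι ι ℂ}
    (hQ : (lyapunovMap H X).PosSemidef)
    (hobs : ∀ (μ : ℂ) w, H *ᵥ w = μ • w → lyapunovMap H X *ᵥ w = 0 → w = 0) : X.PosDef := by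
  have hX := posSemidef_of_posSemidef_lyapunovMap hH hQ
  refine hX.posDef_iff_isUnit.mpr (mulVec_injective_iff_isUnit.mp ?_)
  have hker : LinearMap.ker X.mulVecLin = ⊥ := by
    by_contra hne
    obtain ⟨w, hw, hw0, μ, hHw⟩ := exists_mulVec_eq_smul_of_mapsTo hne fun x hx =>
      (mulVec_eq_zero_of_mulVec_eq_zero_of_posSemidef_lyapunovMap hX.isHermitian hQ hx).2
    exact hw0 (hobs μ w hHw
      (mulVec_eq_zero_of_mulVec_eq_zero_of_posSemidef_lyapunovMap hX.isHermitian hQ hw).1)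
  exact LinearMap.ker_eq_bot.mp hker

end Lyapunov

end Matrix

/-- Given a rational Arnoldi decomposition `F·Z = v·h + Z·H` with `[v Z]` of
full column rank, `H` upper triangular with diagonal entries `s i` of positive
real part and not eigenvalues of `F`, the Lyapunov equation
`Yt·H + Hᴴ·Yt − (ZᴴBBᴴZ + hᴴh) = 0` has a unique Hermitian solution, and it is
positive definite. -/
theorem stmt3 (n j m : ℕ)
    (F : Matrix (Fin n) (Fin n) ℂ) (v : Fin n → ℂ)
    (Z : Matrix (Fin n) (Fin j) ℂ) (h : Matrix (Fin 1) (Fin j) ℂ)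
    (H : Matrix (Fin j) (Fin j) ℂ) (s : Fin j → ℂ)
    (htri : ∀ i k : Fin j, k < i → H i k = 0) (hdiag : ∀ i : Fin j, H i i = s i)
    (hrank : LinearIndependent ℂ
      (fun c : Fin 1 ⊕ Fin j =>
        (fromCols (Matrix.of fun i (_ : Fin 1) => v i) Z)ᵀ c))
    (hbrad : F * Z = (Matrix.of fun i (_ : Fin 1) => v i) * h + Z * H)
    (hre : ∀ i, 0 < (s i).re) (hspec : ∀ i, s i ∉ spectrum ℂ F)
    (B : Matrix (Fin n) (Fin m) ℂ) :
    ∃ Yt : Matrix (Fin j) (Fin j) ℂ,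
      (Yt.IsHermitian ∧ Yt * H + Hᴴ * Yt - (Zᴴ * B * Bᴴ * Z + hᴴ * h) = 0 ∧
        Yt.PosDef) ∧
      ∀ Y' : Matrix (Fin j) (Fin j) ℂ,
        Y'.IsHermitian ∧ Y' * H + Hᴴ * Y' - (Zᴴ * B * Bᴴ * Z + hᴴ * h) = 0 →
          Y' = Yt := by
  have hHtri : H.IsUpperTriangular := fun i k hik => htri i k hik
  have hH : ∀ μ ∈ spectrum ℂ H, 0 < μ.re := fun μ hμ => by
    obtain ⟨i, rfl⟩ := hHtri.mem_spectrum_iff.mp hμ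
    exact hdiag i ▸ hre i
  set S := fromRows (Bᴴ * Z) h
  have hQ : Sᴴ * S = Zᴴ * B * Bᴴ * Z + hᴴ * h := by
    rw [conjTranspose_fromRows_mul_fromRows, conjTranspose_mul, conjTranspose_conjTranspose,
      ← Matrix.mul_assoc]
  obtain ⟨Y, hY⟩ := (lyapunovMap_bijective hH).2 (Sᴴ * S)
  have hobs : ∀ (μ : ℂ) w, H *ᵥ w = μ • w → lyapunovMap H Y *ᵥ w = 0 → w = 0 := by
    intro μ w hw hYw
    by_contra hw0
    rw [hY, conjTranspose_mul_self_mulVec_eq_zero, fromRows_mulVec] at hYw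
    obtain ⟨i, rfl⟩ :=
      hHtri.mem_spectrum_iff.mp (mem_spectrum_iff_exists_mulVec_eq_smul.mpr ⟨w, hw0, hw⟩)
    exact hspec i <| hdiag i ▸ mem_spectrum_of_mul_eq_add_mul
      (injective_mulVec_of_injective_fromCols_mulVec (mulVec_injective_iff.mpr hrank)) hbrad
      hw0 hw (funext fun t => congrFun hYw (Sum.inr t))
  have hsolves (Y' : Matrix (Fin j) (Fin j) ℂ) :
      Y' * H + Hᴴ * Y' - (Zᴴ * B * Bᴴ * Z + hᴴ * h) = 0 ↔
        lyapunovMap H Y' = lyapunovMap H Y := by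
    rw [sub_eq_zero, hY, hQ, lyapunovMap_apply]
  have hpos :=
    posDef_of_posSemidef_lyapunovMap hH (hY ▸ posSemidef_conjTranspose_mul_self S) hobs
  exact ⟨Y, ⟨hpos.isHermitian, (hsolves Y).mpr rfl, hpos⟩,
    fun Y' hY' => lyapunovMap_injective hH ((hsolves Y').mp hY'.2)⟩
end

section
/- Let A ∈ ℂ^{n×n}, B ∈ ℂ^{n×m}, C ∈ ℂ^{p×n}, Z ∈ ℂ^{n×q}, h ∈ ℂ^{p×q}, H ∈ ℂ^{q×q} with Aᴴ·Z = Cᴴ·h + Z·H, and let Y ∈ ℂ^{q×q} be Hermitian. Set S = Zᴴ B Bᴴ Z. Then the Riccati residual of X = Z Y Zᴴ factors as 𝓡(X) = [Cᴴ Z] · M · [Cᴴ Z]ᴴ, where M is the (p+q)×(p+q) block matrix M = [[I_p, h·Y], [Y·hᴴ, H·Y + Y·Hᴴ − Y·S·Y]]. -/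
open Matrix

/-!
Multiplying out `[Cᴴ Z] M [Cᴴ Z]ᴴ` gives
`CᴴC + Cᴴ h Y Zᴴ + Z Y hᴴ C + Z (HY + YHᴴ − YSY) Zᴴ`. The Krylov-type relation
`Aᴴ Z = Cᴴ h + Z H` and its conjugate transpose `Zᴴ A = hᴴ C + Hᴴ Zᴴ` turn the Lyapunov
part `Aᴴ X + X A` of the residual into exactly the terms of this expansion that involve
`h` and `H`, while `X B Bᴴ X = Z (Y S Y) Zᴴ`.
-/

namespace Matrix

variable {α : Type*} [Ring α] [StarRing α]
variable {n p q : Type*} [Fintype p] [Fintype q]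

theorem conjTranspose_mul_eq_of_mul_eq [Fintype n] {A : Matrix n n α} {C : Matrix p n α}
    {Z : Matrix n q α} {h : Matrix p q α} {H : Matrix q q α}
    (hAZ : Aᴴ * Z = Cᴴ * h + Z * H) : Zᴴ * A = hᴴ * C + Hᴴ * Zᴴ := by
  simpa only [conjTranspose_mul, conjTranspose_add, conjTranspose_conjTranspose]
    using congrArg conjTranspose hAZ

theorem fromCols_mul_fromBlocks_mul_conjTranspose_fromCols
    (U : Matrix n p α) (V : Matrix n q α) (P : Matrix p p α) (Q : Matrix p q α)
    (R : Matrix q p α) (S : Matrix q q α) :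
    fromCols U V * fromBlocks P Q R S * (fromCols U V)ᴴ =
      U * P * Uᴴ + U * Q * Vᴴ + V * R * Uᴴ + V * S * Vᴴ := by
  rw [conjTranspose_fromCols_eq_fromRows_conjTranspose, fromCols_mul_fromBlocks,
    fromCols_mul_fromRows]
  simp only [Matrix.add_mul]
  abel

theorem lyapunov_mul_conjTranspose_of_mul_eq [Fintype n] {A : Matrix n n α} {C : Matrix p n α}
    {Z : Matrix n q α} {h : Matrix p q α} {H : Matrix q q α}
    (hAZ : Aᴴ * Z = Cᴴ * h + Z * H) (Y : Matrix q q α) :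
    Aᴴ * (Z * Y * Zᴴ) + Z * Y * Zᴴ * A =
      Cᴴ * (h * Y) * Zᴴ + Z * (Y * hᴴ) * C + Z * (H * Y + Y * Hᴴ) * Zᴴ := by
  have hZA := conjTranspose_mul_eq_of_mul_eq hAZ
  calc Aᴴ * (Z * Y * Zᴴ) + Z * Y * Zᴴ * A
      = Aᴴ * Z * Y * Zᴴ + Z * Y * (Zᴴ * A) := by simp only [Matrix.mul_assoc]
    _ = (Cᴴ * h + Z * H) * Y * Zᴴ + Z * Y * (hᴴ * C + Hᴴ * Zᴴ) := by rw [hAZ, hZA]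
    _ = _ := by
      simp only [Matrix.add_mul, Matrix.mul_add, Matrix.mul_assoc]
      abel

end Matrix

theorem stmt7_general (n m p q : ℕ)
    (A : Matrix (Fin n) (Fin n) ℂ) (B : Matrix (Fin n) (Fin m) ℂ)
    (C : Matrix (Fin p) (Fin n) ℂ) (Z : Matrix (Fin n) (Fin q) ℂ)
    (h : Matrix (Fin p) (Fin q) ℂ) (H : Matrix (Fin q) (Fin q) ℂ)
    (hbrad : Aᴴ * Z = Cᴴ * h + Z * H)
    (Y : Matrix (Fin q) (Fin q) ℂ) :
    Aᴴ * (Z * Y * Zᴴ) + (Z * Y * Zᴴ) * A + Cᴴ * C -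
        (Z * Y * Zᴴ) * B * Bᴴ * (Z * Y * Zᴴ) =
      fromCols Cᴴ Z *
        fromBlocks 1 (h * Y) (Y * hᴴ)
          (H * Y + Y * Hᴴ - Y * (Zᴴ * B * Bᴴ * Z) * Y) *
        (fromCols Cᴴ Z)ᴴ := by
  have hquad :
      Z * Y * Zᴴ * B * Bᴴ * (Z * Y * Zᴴ) = Z * (Y * (Zᴴ * B * Bᴴ * Z) * Y) * Zᴴ := by
    simp only [Matrix.mul_assoc]
  rw [fromCols_mul_fromBlocks_mul_conjTranspose_fromCols, conjTranspose_conjTranspose,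
    lyapunov_mul_conjTranspose_of_mul_eq hbrad, hquad, Matrix.mul_one]
  simp only [Matrix.mul_sub, Matrix.sub_mul, Matrix.mul_add, Matrix.add_mul]
  abel

/-- Factorization of the Riccati residual of `X = Z Y Zᴴ` through the basis
`[Cᴴ Z]`: `𝓡(X) = [Cᴴ Z] · M · [Cᴴ Z]ᴴ` with
`M = [[I, hY], [Yhᴴ, HY + YHᴴ − YSY]]` and `S = ZᴴBBᴴZ`. -/
theorem stmt7 (n m p q : ℕ)
    (A : Matrix (Fin n) (Fin n) ℂ) (B : Matrix (Fin n) (Fin m) ℂ)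
    (C : Matrix (Fin p) (Fin n) ℂ) (Z : Matrix (Fin n) (Fin q) ℂ)
    (h : Matrix (Fin p) (Fin q) ℂ) (H : Matrix (Fin q) (Fin q) ℂ)
    (hbrad : Aᴴ * Z = Cᴴ * h + Z * H)
    (Y : Matrix (Fin q) (Fin q) ℂ) (hY : Y.IsHermitian) :
    Aᴴ * (Z * Y * Zᴴ) + (Z * Y * Zᴴ) * A + Cᴴ * C -
        (Z * Y * Zᴴ) * B * Bᴴ * (Z * Y * Zᴴ) =
      fromCols Cᴴ Z *
        fromBlocks 1 (h * Y) (Y * hᴴ)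
          (H * Y + Y * Hᴴ - Y * (Zᴴ * B * Bᴴ * Z) * Y) *
        (fromCols Cᴴ Z)ᴴ :=
  stmt7_general n m p q A B C Z h H hbrad Y
end

section
/- Let A_1 ∈ ℂ^{n_1×n_1}, A_2 ∈ ℂ^{n_2×n_2}, B_1 ∈ ℂ^{n_1×m}, B_2 ∈ ℂ^{n_2×m}, C_1 ∈ ℂ^{p×n_1}, C_2 ∈ ℂ^{p×n_2}, and for i = 1, 2 let Z_i ∈ ℂ^{n_i×q}, h_i ∈ ℂ^{p×q}, H_i ∈ ℂ^{q×q} satisfy A_iᴴ·Z_i = C_iᴴ·h_i + Z_i·H_i. Let Y ∈ ℂ^{q×q} be invertible and satisfy the Sylvester equation Y^{-1}·H_1 + H_2ᴴ·Y^{-1} = S + h_2ᴴ·h_1, where S = Z_2ᴴ B_2 B_1ᴴ Z_1. Then the matrix X = Z_1 Y Z_2ᴴ satisfies A_1ᴴX + X A_2 + C_1ᴴC_2 − X B_2 B_1ᴴ X = (C_1ᴴ + Z_1·Y·h_2ᴴ)·(C_2 + h_1·Y·Z_2ᴴ); in particular, the nonsymmetric Riccati residual of X has rank at most p. -/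
/-!
Substituting the two Arnoldi relations into `A₁ᴴX + XA₂` with `X = Z₁YZ₂ᴴ` leaves
`C₁ᴴh₁YZ₂ᴴ + Z₁Yh₂ᴴC₂ + Z₁(H₁Y + YH₂ᴴ)Z₂ᴴ`. Multiplying the Sylvester equation by `Y` on both
sides gives `H₁Y + YH₂ᴴ = Y(Z₂ᴴB₂B₁ᴴZ₁ + h₂ᴴh₁)Y`, whose first term cancels the quadratic term
`XB₂B₁ᴴX` of the residual; what remains is the expansion of `(C₁ᴴ + Z₁Yh₂ᴴ)(C₂ + h₁YZ₂ᴴ)`,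
whose rank is bounded by its inner dimension `p`.
-/

open Matrix

namespace Matrix

section Riccati

variable {R : Type*} [Ring R] [StarRing R]
  {n₁ n₂ m p q : Type*} [Fintype n₁] [Fintype n₂] [Fintype m] [Fintype p] [Fintype q]

def nonsymmRiccatiResidual (A₁ : Matrix n₁ n₁ R) (A₂ : Matrix n₂ n₂ R)
    (B₁ : Matrix n₁ m R) (B₂ : Matrix n₂ m R) (C₁ : Matrix p n₁ R) (C₂ : Matrix p n₂ R)
    (X : Matrix n₁ n₂ R) : Matrix n₁ n₂ R :=
  A₁ᴴ * X + X * A₂ + C₁ᴴ * C₂ - X * B₂ * B₁ᴴ * X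

theorem nonsymmRiccatiResidual_eq_mul_of_arnoldi
    {A₁ : Matrix n₁ n₁ R} {A₂ : Matrix n₂ n₂ R} {B₁ : Matrix n₁ m R} {B₂ : Matrix n₂ m R}
    {C₁ : Matrix p n₁ R} {C₂ : Matrix p n₂ R} {Z₁ : Matrix n₁ q R} {Z₂ : Matrix n₂ q R}
    {h₁ h₂ : Matrix p q R} {H₁ H₂ Y : Matrix q q R}
    (hZ₁ : A₁ᴴ * Z₁ = C₁ᴴ * h₁ + Z₁ * H₁) (hZ₂ : A₂ᴴ * Z₂ = C₂ᴴ * h₂ + Z₂ * H₂)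
    (hY : H₁ * Y + Y * H₂ᴴ = Y * (Z₂ᴴ * B₂ * B₁ᴴ * Z₁ + h₂ᴴ * h₁) * Y) :
    nonsymmRiccatiResidual A₁ A₂ B₁ B₂ C₁ C₂ (Z₁ * Y * Z₂ᴴ) =
      (C₁ᴴ + Z₁ * Y * h₂ᴴ) * (C₂ + h₁ * Y * Z₂ᴴ) := by
  have hZ₂' : Z₂ᴴ * A₂ = h₂ᴴ * C₂ + H₂ᴴ * Z₂ᴴ := by
    simpa only [conjTranspose_mul, conjTranspose_add, conjTranspose_conjTranspose]
      using congrArg conjTranspose hZ₂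
  have hA₁X : A₁ᴴ * (Z₁ * Y * Z₂ᴴ) = (C₁ᴴ * h₁ + Z₁ * H₁) * Y * Z₂ᴴ := by
    rw [← hZ₁]; simp only [Matrix.mul_assoc]
  have hXA₂ : Z₁ * Y * Z₂ᴴ * A₂ = Z₁ * Y * (h₂ᴴ * C₂ + H₂ᴴ * Z₂ᴴ) := by
    rw [← hZ₂']; simp only [Matrix.mul_assoc]
  have hmiddle := congrArg (Z₁ * · * Z₂ᴴ) hY
  simp only [Matrix.mul_add, Matrix.add_mul, Matrix.mul_assoc] at hmiddle
  rw [nonsymmRiccatiResidual, hA₁X, hXA₂]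
  simp only [Matrix.mul_add, Matrix.add_mul, Matrix.mul_assoc]
  rw [← sub_eq_zero, ← sub_eq_zero.mpr hmiddle]
  abel

end Riccati

theorem mul_add_mul_eq_of_inv_mul_add_mul_inv_eq {R q : Type*} [CommRing R] [Fintype q]
    [DecidableEq q] {H₁ H₂ Y M : Matrix q q R} (hY : IsUnit Y)
    (h : Y⁻¹ * H₁ + H₂ * Y⁻¹ = M) : H₁ * Y + Y * H₂ = Y * M * Y := by
  have hdet : IsUnit Y.det := (isUnit_iff_isUnit_det Y).mp hY
  rw [← h, Matrix.mul_add, Matrix.add_mul, mul_nonsing_inv_cancel_left _ _ hdet,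
    Matrix.mul_assoc Y (H₂ * Y⁻¹), nonsing_inv_mul_cancel_right _ _ hdet]

end Matrix

/-- Nonsymmetric Riccati residual factorization: given two compressed block
rational Arnoldi decompositions `A_iᴴ·Z_i = C_iᴴ·h_i + Z_i·H_i` and an
invertible `Y` solving the Sylvester equation
`Y⁻¹·H₁ + H₂ᴴ·Y⁻¹ = Z₂ᴴB₂B₁ᴴZ₁ + h₂ᴴh₁`, the nonsymmetric Riccati residual of
`X = Z₁ Y Z₂ᴴ` factors as `(C₁ᴴ + Z₁Yh₂ᴴ)(C₂ + h₁YZ₂ᴴ)` and hence has rank at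
most `p`. -/
theorem stmt11 (n₁ n₂ m p q : ℕ)
    (A₁ : Matrix (Fin n₁) (Fin n₁) ℂ) (A₂ : Matrix (Fin n₂) (Fin n₂) ℂ)
    (B₁ : Matrix (Fin n₁) (Fin m) ℂ) (B₂ : Matrix (Fin n₂) (Fin m) ℂ)
    (C₁ : Matrix (Fin p) (Fin n₁) ℂ) (C₂ : Matrix (Fin p) (Fin n₂) ℂ)
    (Z₁ : Matrix (Fin n₁) (Fin q) ℂ) (Z₂ : Matrix (Fin n₂) (Fin q) ℂ)
    (h₁ h₂ : Matrix (Fin p) (Fin q) ℂ)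
    (H₁ H₂ : Matrix (Fin q) (Fin q) ℂ)
    (hbrad₁ : A₁ᴴ * Z₁ = C₁ᴴ * h₁ + Z₁ * H₁)
    (hbrad₂ : A₂ᴴ * Z₂ = C₂ᴴ * h₂ + Z₂ * H₂)
    (Y : Matrix (Fin q) (Fin q) ℂ) (hYu : IsUnit Y)
    (hsylv : Y⁻¹ * H₁ + H₂ᴴ * Y⁻¹ = Z₂ᴴ * B₂ * B₁ᴴ * Z₁ + h₂ᴴ * h₁) :
    A₁ᴴ * (Z₁ * Y * Z₂ᴴ) + (Z₁ * Y * Z₂ᴴ) * A₂ + C₁ᴴ * C₂ -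
        (Z₁ * Y * Z₂ᴴ) * B₂ * B₁ᴴ * (Z₁ * Y * Z₂ᴴ) =
      (C₁ᴴ + Z₁ * Y * h₂ᴴ) * (C₂ + h₁ * Y * Z₂ᴴ) ∧
    (A₁ᴴ * (Z₁ * Y * Z₂ᴴ) + (Z₁ * Y * Z₂ᴴ) * A₂ + C₁ᴴ * C₂ -
        (Z₁ * Y * Z₂ᴴ) * B₂ * B₁ᴴ * (Z₁ * Y * Z₂ᴴ)).rank ≤ p := by
  have hfactor : nonsymmRiccatiResidual A₁ A₂ B₁ B₂ C₁ C₂ (Z₁ * Y * Z₂ᴴ) =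
      (C₁ᴴ + Z₁ * Y * h₂ᴴ) * (C₂ + h₁ * Y * Z₂ᴴ) :=
    nonsymmRiccatiResidual_eq_mul_of_arnoldi hbrad₁ hbrad₂
      (mul_add_mul_eq_of_inv_mul_add_mul_inv_eq hYu hsylv)
  refine ⟨hfactor, ?_⟩
  rw [← nonsymmRiccatiResidual, hfactor]
  exact (rank_mul_le_left _ _).trans (rank_le_width _)
end

section
/- Let A ∈ ℂ^{n×n}, B ∈ ℂ^{n×m}, C ∈ ℂ^{1×n}, Z ∈ ℂ^{n×j}, h ∈ ℂ^{1×j}, H ∈ ℂ^{j×j} with Aᴴ·Z = Cᴴ·h + Z·H, and let Y ∈ ℂ^{j×j} be Hermitian. Let W̃ ∈ ℂ^{n×j} satisfy W̃ᴴ·Z = I_j and W̃ᴴ·(Cᴴ + Z·Y·hᴴ) = 0. Then W̃ᴴ·Cᴴ = −Y·hᴴ, and the projected Riccati residual satisfies W̃ᴴ·𝓡(Z Y Zᴴ)·W̃ = H·Y + Y·Hᴴ − Y·(Zᴴ B Bᴴ Z + hᴴ h)·Y. In particular, W̃ᴴ·𝓡(Z Y Zᴴ)·W̃ = 0 if and only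 if Y solves the reduced Riccati equation H·Y + Y·Hᴴ − Y·(Zᴴ B Bᴴ Z + hᴴ h)·Y = 0. -/
open Matrix

/-
Since `W̃ᴴZ = I`, compressing `𝓡(ZYZᴴ)` by `W̃` turns every occurrence of `ZYZᴴ` into `Y`, so the
projected residual is `KY + YKᴴ + (W̃ᴴCᴴ)(W̃ᴴCᴴ)ᴴ − Y(ZᴴBBᴴZ)Y` with `K = W̃ᴴAᴴZ`. The relation
`AᴴZ = Cᴴh + ZH` gives `K = W̃ᴴCᴴh + H`, and annihilating the residual factor gives
`W̃ᴴCᴴ = −Yhᴴ`; substituting, the `hᴴh` contributions of the three terms collapse to `−Yhᴴh Y`.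
-/

theorem Matrix.mul_eq_neg_of_mul_add_mul_eq_zero {R n p k : Type*} [Ring R]
    [Fintype n] [Fintype k] [DecidableEq k] {W : Matrix k n R} {Z : Matrix n k R}
    {D : Matrix n p R} {M : Matrix k p R} (hWZ : W * Z = 1) (hW : W * (D + Z * M) = 0) :
    W * D = -M := by
  rwa [Matrix.mul_add, ← Matrix.mul_assoc, hWZ, Matrix.one_mul, add_eq_zero_iff_eq_neg] at hW

section Riccati

variable {R : Type*} [CommRing R] [StarRing R]
  {n m p k : Type*} [Fintype n] [Fintype m] [Fintype p] [Fintype k] [DecidableEq k]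

def riccatiResidual (A : Matrix n n R) (B : Matrix n m R) (C : Matrix p n R)
    (X : Matrix n n R) : Matrix n n R :=
  Aᴴ * X + X * A + Cᴴ * C - X * B * Bᴴ * X

theorem conjTranspose_mul_riccatiResidual_mul (A : Matrix n n R) (B : Matrix n m R)
    (C : Matrix p n R) {Z Wt : Matrix n k R} (Y : Matrix k k R) (hWZ : Wtᴴ * Z = 1) :
    Wtᴴ * riccatiResidual A B C (Z * Y * Zᴴ) * Wt =
      (Wtᴴ * Aᴴ * Z) * Y + Y * (Wtᴴ * Aᴴ * Z)ᴴ + (Wtᴴ * Cᴴ) * (Wtᴴ * Cᴴ)ᴴ -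
        Y * (Zᴴ * B * Bᴴ * Z) * Y := by
  have hZW : Zᴴ * Wt = 1 := by simpa using congrArg conjTranspose hWZ
  simp only [riccatiResidual, conjTranspose_mul, conjTranspose_conjTranspose, Matrix.mul_add,
    Matrix.add_mul, Matrix.mul_sub, Matrix.sub_mul, Matrix.mul_assoc, hZW, Matrix.mul_one]
  simp only [← Matrix.mul_assoc, hWZ, Matrix.one_mul]

end Riccati

/-- Projection interpretation (p = 1): if `WtᴴZ = I` and `Wt` annihilates the
residual factor `Cᴴ + ZYhᴴ`, then `WtᴴCᴴ = −Yhᴴ` and the projected Riccati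
residual `Wtᴴ𝓡(ZYZᴴ)Wt` equals the reduced Riccati expression
`HY + YHᴴ − Y(ZᴴBBᴴZ + hᴴh)Y`; in particular it vanishes iff `Y` solves the
reduced Riccati equation. -/
theorem stmt12 (n m j : ℕ)
    (A : Matrix (Fin n) (Fin n) ℂ) (B : Matrix (Fin n) (Fin m) ℂ)
    (C : Matrix (Fin 1) (Fin n) ℂ) (Z : Matrix (Fin n) (Fin j) ℂ)
    (h : Matrix (Fin 1) (Fin j) ℂ) (H : Matrix (Fin j) (Fin j) ℂ)
    (hbrad : Aᴴ * Z = Cᴴ * h + Z * H)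
    (Y : Matrix (Fin j) (Fin j) ℂ) (hY : Y.IsHermitian)
    (Wt : Matrix (Fin n) (Fin j) ℂ)
    (hWZ : Wtᴴ * Z = 1) (hWR : Wtᴴ * (Cᴴ + Z * Y * hᴴ) = 0) :
    Wtᴴ * Cᴴ = -(Y * hᴴ) ∧
    Wtᴴ * (Aᴴ * (Z * Y * Zᴴ) + (Z * Y * Zᴴ) * A + Cᴴ * C -
        (Z * Y * Zᴴ) * B * Bᴴ * (Z * Y * Zᴴ)) * Wt =
      H * Y + Y * Hᴴ - Y * (Zᴴ * B * Bᴴ * Z + hᴴ * h) * Y ∧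
    (Wtᴴ * (Aᴴ * (Z * Y * Zᴴ) + (Z * Y * Zᴴ) * A + Cᴴ * C -
        (Z * Y * Zᴴ) * B * Bᴴ * (Z * Y * Zᴴ)) * Wt = 0 ↔
      H * Y + Y * Hᴴ - Y * (Zᴴ * B * Bᴴ * Z + hᴴ * h) * Y = 0) := by
  have hWC : Wtᴴ * Cᴴ = -(Y * hᴴ) :=
    mul_eq_neg_of_mul_add_mul_eq_zero hWZ (by rwa [Matrix.mul_assoc] at hWR)
  have hK : Wtᴴ * Aᴴ * Z = H - Y * hᴴ * h := by
    rw [Matrix.mul_assoc, hbrad, Matrix.mul_add, ← Matrix.mul_assoc, hWC, ← Matrix.mul_assoc,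
      hWZ, Matrix.one_mul, Matrix.neg_mul]
    abel
  have hproj : Wtᴴ * riccatiResidual A B C (Z * Y * Zᴴ) * Wt =
      H * Y + Y * Hᴴ - Y * (Zᴴ * B * Bᴴ * Z + hᴴ * h) * Y := by
    rw [conjTranspose_mul_riccatiResidual_mul A B C Y hWZ, hK, hWC]
    simp only [conjTranspose_sub, conjTranspose_neg, conjTranspose_mul, conjTranspose_conjTranspose,
      hY.eq]
    simp only [Matrix.mul_add, Matrix.add_mul, Matrix.mul_sub, Matrix.sub_mul, Matrix.mul_neg,
      Matrix.neg_mul, neg_neg, Matrix.mul_assoc]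
    abel
  exact ⟨hWC, hproj, by rw [← riccatiResidual, hproj]⟩
end

section
/- Let A ∈ ℂ^{n×n}, B ∈ ℂ^{n×m}, C ∈ ℂ^{1×n}, Z ∈ ℂ^{n×j}, h ∈ ℂ^{1×j}, H ∈ ℂ^{j×j} with Aᴴ·Z = Cᴴ·h + Z·H. Let Y ∈ ℂ^{j×j} be Hermitian and invertible with H·Y + Y·Hᴴ − Y·(Zᴴ B Bᴴ Z + hᴴ h)·Y = 0, and let W̃ ∈ ℂ^{n×j} satisfy W̃ᴴ·Z = I_j and W̃ᴴ·(Cᴴ + Z·Y·hᴴ) = 0. Then the projected system matrices satisfy W̃ᴴ·Aᴴ·Z = −Y·hᴴ·h + H and W̃ᴴ·(Aᴴ − Z Y Zᴴ·B Bᴴ)·Z = −Y·Hᴴ·Y^{-1}. -/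
open Matrix

/-! The residual condition `Wtᴴ(Cᴴ + ZYhᴴ) = 0` together with `WtᴴZ = I` gives `WtᴴCᴴ = −Yhᴴ`;
projecting the Arnoldi relation then yields `WtᴴAᴴZ = H − Yhᴴh`. Subtracting the projected
feedback term `YZᴴBBᴴZ` leaves `H − YG` with `G = ZᴴBBᴴZ + hᴴh`, and the reduced Riccati
equation `HY + YHᴴ − YGY = 0` says exactly that `(H − YG)Y = −YHᴴ`. -/

namespace Matrix

variable {R : Type*} {n j k : Type*} [Fintype n] [Fintype j] [DecidableEq j]

section Ring

variable [Ring R]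

theorem mul_eq_neg_of_mul_add_mul_eq_zero_s13 {P : Matrix j n R} {Z : Matrix n j R}
    {c : Matrix n k R} {v : Matrix j k R} (hPZ : P * Z = 1) (hres : P * (c + Z * v) = 0) :
    P * c = -v := by
  rw [Matrix.mul_add, ← Matrix.mul_assoc, hPZ, Matrix.one_mul] at hres
  exact eq_neg_of_add_eq_zero_left hres

theorem mul_mul_eq_of_arnoldi [Fintype k] {P : Matrix j n R} {M : Matrix n n R} {Z : Matrix n j R}
    {c : Matrix n k R} {v : Matrix j k R} {h : Matrix k j R} {H : Matrix j j R}
    (hPZ : P * Z = 1) (hPc : P * c = -v) (harnoldi : M * Z = c * h + Z * H) :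
    P * M * Z = -(v * h) + H := by
  rw [Matrix.mul_assoc, harnoldi, Matrix.mul_add, ← Matrix.mul_assoc, ← Matrix.mul_assoc,
    hPc, hPZ, Matrix.one_mul, Matrix.neg_mul]

theorem mul_sub_mul_mul_eq {P : Matrix j n R} {M : Matrix n n R} {Z : Matrix n j R}
    (K : Matrix j n R) (hPZ : P * Z = 1) :
    P * (M - Z * K) * Z = P * M * Z - K * Z := by
  rw [Matrix.mul_sub, Matrix.sub_mul, ← Matrix.mul_assoc P Z, hPZ, Matrix.one_mul]

end Ring

theorem sub_mul_eq_neg_mul_inv_of_riccati [CommRing R] {H K G Y : Matrix j j R}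
    (hYu : IsUnit Y) (hric : H * Y + Y * K - Y * G * Y = 0) :
    H - Y * G = -(Y * K * Y⁻¹) := by
  have hYdet : IsUnit Y.det := (Matrix.isUnit_iff_isUnit_det Y).mp hYu
  have hmul : (H - Y * G) * Y = -(Y * K) := by
    rw [Matrix.sub_mul]
    exact eq_neg_of_add_eq_zero_left (by rw [← hric]; abel)
  rw [← Matrix.mul_nonsing_inv_cancel_right Y (H - Y * G) hYdet, hmul, Matrix.neg_mul]

end Matrix

theorem stmt13_general (n m j : ℕ)
    (A : Matrix (Fin n) (Fin n) ℂ) (B : Matrix (Fin n) (Fin m) ℂ)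
    (C : Matrix (Fin 1) (Fin n) ℂ) (Z : Matrix (Fin n) (Fin j) ℂ)
    (h : Matrix (Fin 1) (Fin j) ℂ) (H : Matrix (Fin j) (Fin j) ℂ)
    (hbrad : Aᴴ * Z = Cᴴ * h + Z * H)
    (Y : Matrix (Fin j) (Fin j) ℂ) (hYu : IsUnit Y)
    (hric : H * Y + Y * Hᴴ - Y * (Zᴴ * B * Bᴴ * Z + hᴴ * h) * Y = 0)
    (Wt : Matrix (Fin n) (Fin j) ℂ)
    (hWZ : Wtᴴ * Z = 1) (hWR : Wtᴴ * (Cᴴ + Z * Y * hᴴ) = 0) :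
    Wtᴴ * Aᴴ * Z = -(Y * hᴴ * h) + H ∧
    Wtᴴ * (Aᴴ - Z * Y * Zᴴ * B * Bᴴ) * Z = -(Y * Hᴴ * Y⁻¹) := by
  have hWC : Wtᴴ * Cᴴ = -(Y * hᴴ) :=
    mul_eq_neg_of_mul_add_mul_eq_zero_s13 hWZ (by rwa [Matrix.mul_assoc Z] at hWR)
  have hproj : Wtᴴ * Aᴴ * Z = -(Y * hᴴ * h) + H := mul_mul_eq_of_arnoldi hWZ hWC hbrad
  refine ⟨hproj, ?_⟩
  have hfeedback : Z * Y * Zᴴ * B * Bᴴ = Z * (Y * Zᴴ * B * Bᴴ) := by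
    simp only [Matrix.mul_assoc]
  rw [hfeedback, mul_sub_mul_mul_eq _ hWZ, hproj,
    ← sub_mul_eq_neg_mul_inv_of_riccati hYu hric]
  simp only [Matrix.mul_add, Matrix.mul_assoc]
  abel

/-- Projected system matrices: under the rational Arnoldi decomposition
`Aᴴ·Z = Cᴴ·h + Z·H`, with `Y` a Hermitian invertible solution of the reduced
Riccati equation and `Wt` the oblique projection data (`WtᴴZ = I`,
`Wtᴴ(Cᴴ + ZYhᴴ) = 0`), one has `WtᴴAᴴZ = −Yhᴴh + H` and
`Wtᴴ(Aᴴ − ZYZᴴBBᴴ)Z = −YHᴴY⁻¹`. -/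
theorem stmt13 (n m j : ℕ)
    (A : Matrix (Fin n) (Fin n) ℂ) (B : Matrix (Fin n) (Fin m) ℂ)
    (C : Matrix (Fin 1) (Fin n) ℂ) (Z : Matrix (Fin n) (Fin j) ℂ)
    (h : Matrix (Fin 1) (Fin j) ℂ) (H : Matrix (Fin j) (Fin j) ℂ)
    (hbrad : Aᴴ * Z = Cᴴ * h + Z * H)
    (Y : Matrix (Fin j) (Fin j) ℂ) (hY : Y.IsHermitian) (hYu : IsUnit Y)
    (hric : H * Y + Y * Hᴴ - Y * (Zᴴ * B * Bᴴ * Z + hᴴ * h) * Y = 0)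
    (Wt : Matrix (Fin n) (Fin j) ℂ)
    (hWZ : Wtᴴ * Z = 1) (hWR : Wtᴴ * (Cᴴ + Z * Y * hᴴ) = 0) :
    Wtᴴ * Aᴴ * Z = -(Y * hᴴ * h) + H ∧
    Wtᴴ * (Aᴴ - Z * Y * Zᴴ * B * Bᴴ) * Z = -(Y * Hᴴ * Y⁻¹) :=
  stmt13_general n m j A B C Z h H hbrad Y hYu hric Wt hWZ hWR
end

section
/- Let H ∈ ℂ^{q×q}, U_2 ∈ ℂ^{q×p}, μ ∈ ℂ, Z ∈ ℂ^{n×q}, Ẑ ∈ ℂ^{n×p}, h ∈ ℂ^{p×q}, U_1 ∈ ℂ^{p×p}, B ∈ ℂ^{n×m}. Suppose the Hermitian matrix Ỹ = [[Y_{11}, Y_{12}], [Y_{12}ᴴ, Y_{22}]] ∈ ℂ^{(q+p)×(q+p)} (with Y_{11} ∈ ℂ^{q×q} Hermitian, Y_{12} ∈ ℂ^{q×p}, Y_{22} ∈ ℂ^{p×p} Hermitian) solves the extended Lyapunov equation Ỹ·H_+ + H_+ᴴ·Ỹ = [Z Ẑ]ᴴ B Bᴴ [Z Ẑ] + [h U_1]ᴴ·[h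 U_1], where H_+ = [[H, U_2], [0, μ·I_p]]. Then: (i) Y_{11}·H + Hᴴ·Y_{11} = Zᴴ B Bᴴ Z + hᴴ h; (ii) (μ·I_q + Hᴴ)·Y_{12} = −Y_{11}·U_2 + Zᴴ B Bᴴ Ẑ + hᴴ·U_1; and (iii) (μ + μ̄)·Y_{22} = −Y_{12}ᴴ·U_2 − U_2ᴴ·Y_{12} + Ẑᴴ B Bᴴ Ẑ + U_1ᴴ·U_1. -/
open Matrix

theorem fromBlocks_mul_add_conjTranspose_mul_fromBlocks {l k R : Type*} [Fintype l] [Fintype k]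
    [DecidableEq l] [DecidableEq k] [CommRing R] [StarRing R]
    (Y₁₁ : Matrix l l R) (Y₁₂ : Matrix l k R) (Y₂₂ : Matrix k k R)
    (H : Matrix l l R) (U : Matrix l k R) (μ : R) :
    fromBlocks Y₁₁ Y₁₂ Y₁₂ᴴ Y₂₂ * fromBlocks H U 0 (μ • (1 : Matrix k k R)) +
        (fromBlocks H U 0 (μ • (1 : Matrix k k R)))ᴴ * fromBlocks Y₁₁ Y₁₂ Y₁₂ᴴ Y₂₂ =
      fromBlocks (Y₁₁ * H + Hᴴ * Y₁₁) (Y₁₁ * U + (μ • (1 : Matrix l l R) + Hᴴ) * Y₁₂)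
        (Y₁₂ᴴ * H + Uᴴ * Y₁₁ + star μ • Y₁₂ᴴ)
        ((μ + star μ) • Y₂₂ + (Y₁₂ᴴ * U + Uᴴ * Y₁₂)) := by
  simp only [fromBlocks_conjTranspose, fromBlocks_multiply, fromBlocks_add, conjTranspose_zero,
    conjTranspose_smul, conjTranspose_one, Matrix.mul_zero, Matrix.zero_mul, add_zero,
    Matrix.mul_smul, Matrix.smul_mul, Matrix.mul_one, Matrix.one_mul, Matrix.add_mul, add_smul]
  congr 1 <;> abel

theorem stmt14_general (n m p q : ℕ)
    (H : Matrix (Fin q) (Fin q) ℂ) (U₂ : Matrix (Fin q) (Fin p) ℂ) (μ : ℂ)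
    (Z : Matrix (Fin n) (Fin q) ℂ) (Zh : Matrix (Fin n) (Fin p) ℂ)
    (h : Matrix (Fin p) (Fin q) ℂ) (U₁ : Matrix (Fin p) (Fin p) ℂ)
    (B : Matrix (Fin n) (Fin m) ℂ)
    (Y₁₁ : Matrix (Fin q) (Fin q) ℂ) (Y₁₂ : Matrix (Fin q) (Fin p) ℂ)
    (Y₂₂ : Matrix (Fin p) (Fin p) ℂ)
    (hlyap :
      fromBlocks Y₁₁ Y₁₂ Y₁₂ᴴ Y₂₂ *
          fromBlocks H U₂ 0 (μ • (1 : Matrix (Fin p) (Fin p) ℂ)) +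
        (fromBlocks H U₂ 0 (μ • (1 : Matrix (Fin p) (Fin p) ℂ)))ᴴ *
          fromBlocks Y₁₁ Y₁₂ Y₁₂ᴴ Y₂₂ =
      (fromCols Z Zh)ᴴ * B * Bᴴ * fromCols Z Zh +
        (fromCols h U₁)ᴴ * fromCols h U₁) :
    Y₁₁ * H + Hᴴ * Y₁₁ = Zᴴ * B * Bᴴ * Z + hᴴ * h ∧
    (μ • (1 : Matrix (Fin q) (Fin q) ℂ) + Hᴴ) * Y₁₂ =
      -(Y₁₁ * U₂) + Zᴴ * B * Bᴴ * Zh + hᴴ * U₁ ∧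
    (μ + (starRingEnd ℂ) μ) • Y₂₂ =
      -(Y₁₂ᴴ * U₂) - U₂ᴴ * Y₁₂ + Zhᴴ * B * Bᴴ * Zh + U₁ᴴ * U₁ := by
  rw [fromBlocks_mul_add_conjTranspose_mul_fromBlocks] at hlyap
  simp only [conjTranspose_fromCols_eq_fromRows_conjTranspose, fromRows_mul,
    mul_fromCols, fromCols_fromRows_eq_fromBlocks, fromBlocks_add, fromBlocks_inj] at hlyap
  obtain ⟨h₁₁, h₁₂, -, h₂₂⟩ := hlyap
  refine ⟨h₁₁, ?_, ?_⟩
  · rw [eq_neg_add_of_add_eq h₁₂, add_assoc]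
  · rw [starRingEnd_apply, eq_sub_of_add_eq h₂₂]
    abel

/-- Incremental update of the Lyapunov solution: if the Hermitian block matrix
`Yt = [[Y₁₁, Y₁₂], [Y₁₂ᴴ, Y₂₂]]` solves the extended Lyapunov equation with
`H₊ = [[H, U₂], [0, μI]]`, then `Y₁₁` solves the original Lyapunov equation,
`Y₁₂` solves a shifted linear system, and `Y₂₂` is given explicitly. -/
theorem stmt14 (n m p q : ℕ)
    (H : Matrix (Fin q) (Fin q) ℂ) (U₂ : Matrix (Fin q) (Fin p) ℂ) (μ : ℂ)
    (Z : Matrix (Fin n) (Fin q) ℂ) (Zh : Matrix (Fin n) (Fin p) ℂ)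
    (h : Matrix (Fin p) (Fin q) ℂ) (U₁ : Matrix (Fin p) (Fin p) ℂ)
    (B : Matrix (Fin n) (Fin m) ℂ)
    (Y₁₁ : Matrix (Fin q) (Fin q) ℂ) (Y₁₂ : Matrix (Fin q) (Fin p) ℂ)
    (Y₂₂ : Matrix (Fin p) (Fin p) ℂ)
    (hY₁₁ : Y₁₁.IsHermitian) (hY₂₂ : Y₂₂.IsHermitian)
    (hlyap :
      fromBlocks Y₁₁ Y₁₂ Y₁₂ᴴ Y₂₂ *
          fromBlocks H U₂ 0 (μ • (1 : Matrix (Fin p) (Fin p) ℂ)) +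
        (fromBlocks H U₂ 0 (μ • (1 : Matrix (Fin p) (Fin p) ℂ)))ᴴ *
          fromBlocks Y₁₁ Y₁₂ Y₁₂ᴴ Y₂₂ =
      (fromCols Z Zh)ᴴ * B * Bᴴ * fromCols Z Zh +
        (fromCols h U₁)ᴴ * fromCols h U₁) :
    Y₁₁ * H + Hᴴ * Y₁₁ = Zᴴ * B * Bᴴ * Z + hᴴ * h ∧
    (μ • (1 : Matrix (Fin q) (Fin q) ℂ) + Hᴴ) * Y₁₂ =
      -(Y₁₁ * U₂) + Zᴴ * B * Bᴴ * Zh + hᴴ * U₁ ∧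
    (μ + (starRingEnd ℂ) μ) • Y₂₂ =
      -(Y₁₂ᴴ * U₂) - U₂ᴴ * Y₁₂ + Zhᴴ * B * Bᴴ * Zh + U₁ᴴ * U₁ :=
  stmt14_general n m p q H U₂ μ Z Zh h U₁ B Y₁₁ Y₁₂ Y₂₂ hlyap
end

section
/- Let A ∈ ℂ^{n×n}, B ∈ ℂ^{n×m}, C ∈ ℂ^{p×n}, and let X ∈ ℂ^{n×n} be Hermitian with 𝓡(X) = R·Rᴴ for some R ∈ ℂ^{n×p}. Let s ∈ ℂ with Re(s) > 0 be such that Aᴴ − X B Bᴴ − s·I_n is invertible, and set Ẑ = (Aᴴ − X B Bᴴ − s·I_n)^{-1}·R and Y_{22} = (1/(2·Re(s)))·(I_p + Ẑᴴ B Bᴴ Ẑ). Then Y_{22} is positive definite (in particular invertible), and the updated approximation X' = X + Ẑ·Y_{22}^{-1}·Ẑᴴ satisfies 𝓡(X') = R'·R'ᴴ with R' = R + Ẑ·Y_{22}^{-1}. -/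
/-!
With `F = Aᴴ - XBBᴴ` and `X` Hermitian, `𝓡(X + Δ) = 𝓡(X) + FΔ + ΔFᴴ - ΔBBᴴΔ`. The shift equation
`FẐ = sẐ + R` turns `FΔ + ΔFᴴ` for `Δ = ẐY⁻¹Ẑᴴ` into `(s + s̄)Δ + RY⁻¹Ẑᴴ + ẐY⁻¹Rᴴ`, and the
normalisation `(s + s̄)Y = I + ẐᴴBBᴴẐ` is exactly what makes `(s + s̄)Δ - ΔBBᴴΔ = ẐY⁻¹Y⁻¹Ẑᴴ`,
which completes the square `(R + ẐY⁻¹)(R + ẐY⁻¹)ᴴ`. `Y` is positive definite as a positive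
multiple of the identity plus the Gram matrix of `BᴴẐ`.
-/

open Matrix
open scoped ComplexOrder

namespace Matrix

variable {𝕜 n m p q : Type*} [CommRing 𝕜] [StarRing 𝕜]
  [Fintype n] [Fintype m] [Fintype p] [Fintype q]

def riccatiResidual (A : Matrix n n 𝕜) (B : Matrix n m 𝕜) (C : Matrix q n 𝕜)
    (X : Matrix n n 𝕜) : Matrix n n 𝕜 :=
  Aᴴ * X + X * A + Cᴴ * C - X * B * Bᴴ * X

variable {A : Matrix n n 𝕜} {B : Matrix n m 𝕜} {C : Matrix q n 𝕜} {X : Matrix n n 𝕜}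

theorem riccatiResidual_add (hX : X.IsHermitian) (Δ : Matrix n n 𝕜) :
    riccatiResidual A B C (X + Δ) = riccatiResidual A B C X + (Aᴴ - X * B * Bᴴ) * Δ +
      Δ * (Aᴴ - X * B * Bᴴ)ᴴ - Δ * B * Bᴴ * Δ := by
  simp only [riccatiResidual, conjTranspose_sub, conjTranspose_mul, conjTranspose_conjTranspose,
    hX.eq, Matrix.mul_add, Matrix.add_mul, Matrix.mul_sub, Matrix.sub_mul, Matrix.mul_assoc]
  abel

theorem riccatiResidual_add_mul_inv_mul_conjTranspose [DecidableEq p] (hX : X.IsHermitian)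
    {R Z : Matrix n p 𝕜} (hres : riccatiResidual A B C X = R * Rᴴ) {s : 𝕜}
    (hZ : (Aᴴ - X * B * Bᴴ) * Z = s • Z + R) {Y : Matrix p p 𝕜} (hY : Y.IsHermitian)
    (hYdet : IsUnit Y.det) (hYZ : (s + star s) • Y = 1 + Zᴴ * B * Bᴴ * Z) :
    riccatiResidual A B C (X + Z * Y⁻¹ * Zᴴ) = (R + Z * Y⁻¹) * (R + Z * Y⁻¹)ᴴ := by
  set F := Aᴴ - X * B * Bᴴ
  have hZH : Zᴴ * Fᴴ = star s • Zᴴ + Rᴴ := by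
    simpa [conjTranspose_add, conjTranspose_mul] using congrArg conjTranspose hZ
  have hshift : (s + star s) • (Z * Y⁻¹ * Zᴴ) =
      Z * Y⁻¹ * Y⁻¹ * Zᴴ + Z * Y⁻¹ * Zᴴ * B * Bᴴ * Z * Y⁻¹ * Zᴴ := by
    calc (s + star s) • (Z * Y⁻¹ * Zᴴ) = Z * Y⁻¹ * ((s + star s) • Y) * Y⁻¹ * Zᴴ := by
          rw [Matrix.mul_smul, Matrix.smul_mul, Matrix.smul_mul, Matrix.mul_assoc (Z * Y⁻¹),
            mul_nonsing_inv _ hYdet, Matrix.mul_one]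
      _ = _ := by
          rw [hYZ]
          simp only [Matrix.mul_add, Matrix.add_mul, Matrix.mul_one, Matrix.mul_assoc]
  rw [riccatiResidual_add hX, hres]
  simp only [conjTranspose_add, conjTranspose_mul, hY.inv.eq]
  calc R * Rᴴ + F * (Z * Y⁻¹ * Zᴴ) + Z * Y⁻¹ * Zᴴ * Fᴴ - Z * Y⁻¹ * Zᴴ * B * Bᴴ * (Z * Y⁻¹ * Zᴴ)
      = R * Rᴴ + F * Z * Y⁻¹ * Zᴴ + Z * Y⁻¹ * (Zᴴ * Fᴴ) -
          Z * Y⁻¹ * Zᴴ * B * Bᴴ * Z * Y⁻¹ * Zᴴ := by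
        simp only [Matrix.mul_assoc]
    _ = _ := by
        rw [hZ, hZH]
        simp only [Matrix.mul_add, Matrix.add_mul, Matrix.mul_smul, Matrix.smul_mul,
          Matrix.mul_assoc] at hshift ⊢
        linear_combination (norm := module) hshift

end Matrix

/-- One step of the RADI-type iteration: if the Riccati residual of the
Hermitian `X` factors as `R·Rᴴ`, `Re(s) > 0`, `Zh = (Aᴴ − XBBᴴ − sI)⁻¹R` and
`Y₂₂ = (1/(2Re s))(I + ZhᴴBBᴴZh)`, then `Y₂₂` is positive definite and the
updated `X' = X + Zh Y₂₂⁻¹ Zhᴴ` has Riccati residual `R'·R'ᴴ` with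
`R' = R + Zh Y₂₂⁻¹`. -/
theorem stmt15 (n m p : ℕ)
    (A : Matrix (Fin n) (Fin n) ℂ) (B : Matrix (Fin n) (Fin m) ℂ)
    (C : Matrix (Fin p) (Fin n) ℂ)
    (X : Matrix (Fin n) (Fin n) ℂ) (hX : X.IsHermitian)
    (R : Matrix (Fin n) (Fin p) ℂ)
    (hres : Aᴴ * X + X * A + Cᴴ * C - X * B * Bᴴ * X = R * Rᴴ)
    (s : ℂ) (hs : 0 < s.re)
    (hunit : IsUnit (Aᴴ - X * B * Bᴴ - s • (1 : Matrix (Fin n) (Fin n) ℂ)))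
    (Zh : Matrix (Fin n) (Fin p) ℂ)
    (hZh : Zh = (Aᴴ - X * B * Bᴴ - s • (1 : Matrix (Fin n) (Fin n) ℂ))⁻¹ * R)
    (Y₂₂ : Matrix (Fin p) (Fin p) ℂ)
    (hY₂₂ : Y₂₂ = ((2 * s.re : ℂ))⁻¹ • ((1 : Matrix (Fin p) (Fin p) ℂ) + Zhᴴ * B * Bᴴ * Zh)) :
    Y₂₂.PosDef ∧
    Aᴴ * (X + Zh * Y₂₂⁻¹ * Zhᴴ) + (X + Zh * Y₂₂⁻¹ * Zhᴴ) * A + Cᴴ * C -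
        (X + Zh * Y₂₂⁻¹ * Zhᴴ) * B * Bᴴ * (X + Zh * Y₂₂⁻¹ * Zhᴴ) =
      (R + Zh * Y₂₂⁻¹) * (R + Zh * Y₂₂⁻¹)ᴴ := by
  have h2re : (0 : ℂ) < 2 * s.re := by exact_mod_cast mul_pos two_pos hs
  have hY : Y₂₂.PosDef := by
    have hgram : (Zhᴴ * B * Bᴴ * Zh).PosSemidef := by
      simpa [Matrix.mul_assoc] using posSemidef_conjTranspose_mul_self (Bᴴ * Zh)
    exact hY₂₂ ▸ (PosDef.one.add_posSemidef hgram).smul (inv_pos.mpr h2re)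
  have hZ : (Aᴴ - X * B * Bᴴ) * Zh = s • Zh + R := by
    have hR : (Aᴴ - X * B * Bᴴ - s • 1) * Zh = R := by
      rw [hZh, mul_nonsing_inv_cancel_left _ _ ((isUnit_iff_isUnit_det _).mp hunit)]
    rw [← hR, Matrix.sub_mul _ (s • 1), smul_mul, Matrix.one_mul]
    abel
  have hYZ : (s + star s) • Y₂₂ = 1 + Zhᴴ * B * Bᴴ * Zh := by
    rw [Complex.star_def, Complex.add_conj, hY₂₂, smul_smul]
    push_cast
    rw [mul_inv_cancel₀ h2re.ne', one_smul]
  exact ⟨hY, riccatiResidual_add_mul_inv_mul_conjTranspose hX hres hZ hY.isHermitian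
    ((isUnit_iff_isUnit_det _).mp hY.isUnit) hYZ⟩
end

section
/- Let A ∈ ℂ^{n×n}, C ∈ ℂ^{p×n}, and let X ∈ ℂ^{n×n} be Hermitian such that the Lyapunov residual satisfies Aᴴ X + X A + Cᴴ C = R·Rᴴ for some R ∈ ℂ^{n×p}. Let s ∈ ℂ be such that Aᴴ − s·I_n is invertible, and set Ẑ = (Aᴴ − s·I_n)^{-1}·R. Then the updated approximation X' = X + 2·Re(s)·Ẑ·Ẑᴴ satisfies Aᴴ X' + X' A + Cᴴ C = R'·R'ᴴ with R' = R + 2·Re(s)·Ẑ. -/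
/-!
From `(Aᴴ - s I) Ẑ = R` we get `Aᴴ Ẑ = R + s Ẑ`, so the Lyapunov operator `Y ↦ Aᴴ Y + Y A`
sends `Ẑ Ẑᴴ` to `R Ẑᴴ + Ẑ Rᴴ + (s + s̄) Ẑ Ẑᴴ`. Since `c = s + s̄ = 2 Re s` is self-adjoint,
`c` times this is exactly the cross and square terms of `(R + c Ẑ)(R + c Ẑ)ᴴ`, which are
what the residual gains when `X` is replaced by `X + c Ẑ Ẑᴴ`.
-/

open Matrix

section
variable {m n p α : Type*} [Fintype m] [Fintype n] [Fintype p] [CommRing α] [StarRing α]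

def lyapunovResidual (A : Matrix n n α) (C : Matrix p n α) (X : Matrix n n α) :
    Matrix n n α :=
  Aᴴ * X + X * A + Cᴴ * C

theorem lyapunovResidual_add_smul (A : Matrix n n α) (C : Matrix p n α) (X Y : Matrix n n α)
    (c : α) :
    lyapunovResidual A C (X + c • Y) = lyapunovResidual A C X + c • (Aᴴ * Y + Y * A) := by
  simp only [lyapunovResidual, Matrix.mul_add, Matrix.add_mul, Matrix.mul_smul,
    Matrix.smul_mul]
  module

theorem conjTranspose_mul_add_mul_of_sub_smul_one_mul_eq [DecidableEq n] {A : Matrix n n α}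
    {Z R : Matrix n m α} {s : α} (hZ : (Aᴴ - s • (1 : Matrix n n α)) * Z = R) :
    Aᴴ * (Z * Zᴴ) + Z * Zᴴ * A = R * Zᴴ + Z * Rᴴ + (s + star s) • (Z * Zᴴ) := by
  have hAZ : Aᴴ * Z = R + s • Z := by
    rw [← hZ, Matrix.sub_mul, Matrix.smul_mul, Matrix.one_mul, sub_add_cancel]
  have hZA : Zᴴ * A = Rᴴ + star s • Zᴴ := by
    simpa only [conjTranspose_mul, conjTranspose_conjTranspose, conjTranspose_add,
      conjTranspose_smul] using congrArg conjTranspose hAZ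
  rw [← Matrix.mul_assoc, hAZ, Matrix.mul_assoc, hZA]
  simp only [Matrix.add_mul, Matrix.mul_add, Matrix.smul_mul, Matrix.mul_smul]
  module

theorem lyapunovResidual_adi_step [DecidableEq n] {A : Matrix n n α} {C : Matrix p n α}
    {X : Matrix n n α} {Z R : Matrix n m α} {s : α}
    (hres : lyapunovResidual A C X = R * Rᴴ) (hZ : (Aᴴ - s • (1 : Matrix n n α)) * Z = R) :
    lyapunovResidual A C (X + (s + star s) • (Z * Zᴴ)) =
      (R + (s + star s) • Z) * (R + (s + star s) • Z)ᴴ := by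
  have hstar : star (s + star s) = s + star s := by rw [star_add, star_star, add_comm]
  rw [lyapunovResidual_add_smul, hres, conjTranspose_mul_add_mul_of_sub_smul_one_mul_eq hZ,
    conjTranspose_add, conjTranspose_smul, hstar]
  simp only [Matrix.mul_add, Matrix.add_mul, Matrix.mul_smul, Matrix.smul_mul]
  module

end

theorem stmt16_general (n p : ℕ)
    (A : Matrix (Fin n) (Fin n) ℂ) (C : Matrix (Fin p) (Fin n) ℂ)
    (X : Matrix (Fin n) (Fin n) ℂ)
    (R : Matrix (Fin n) (Fin p) ℂ)
    (hres : Aᴴ * X + X * A + Cᴴ * C = R * Rᴴ)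
    (s : ℂ)
    (hunit : IsUnit (Aᴴ - s • (1 : Matrix (Fin n) (Fin n) ℂ)))
    (Zh : Matrix (Fin n) (Fin p) ℂ)
    (hZh : Zh = (Aᴴ - s • (1 : Matrix (Fin n) (Fin n) ℂ))⁻¹ * R) :
    Aᴴ * (X + (2 * s.re : ℂ) • (Zh * Zhᴴ)) + (X + (2 * s.re : ℂ) • (Zh * Zhᴴ)) * A +
        Cᴴ * C =
      (R + (2 * s.re : ℂ) • Zh) * (R + (2 * s.re : ℂ) • Zh)ᴴ := by
  have hZ : (Aᴴ - s • (1 : Matrix (Fin n) (Fin n) ℂ)) * Zh = R := by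
    rw [hZh, mul_nonsing_inv_cancel_left _ _ ((isUnit_iff_isUnit_det _).mp hunit)]
  have hs : (2 * s.re : ℂ) = s + star s := by
    rw [Complex.star_def, Complex.add_conj, Complex.ofReal_mul, Complex.ofReal_ofNat]
  rw [hs]
  exact lyapunovResidual_adi_step hres hZ

/-- One step of the low-rank ADI iteration for the Lyapunov equation: if the
Lyapunov residual of the Hermitian `X` is `R·Rᴴ` and `Zh = (Aᴴ − sI)⁻¹R`, then
`X' = X + 2Re(s)·ZhZhᴴ` has Lyapunov residual `R'·R'ᴴ` with
`R' = R + 2Re(s)·Zh`. -/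
theorem stmt16 (n p : ℕ)
    (A : Matrix (Fin n) (Fin n) ℂ) (C : Matrix (Fin p) (Fin n) ℂ)
    (X : Matrix (Fin n) (Fin n) ℂ) (hX : X.IsHermitian)
    (R : Matrix (Fin n) (Fin p) ℂ)
    (hres : Aᴴ * X + X * A + Cᴴ * C = R * Rᴴ)
    (s : ℂ)
    (hunit : IsUnit (Aᴴ - s • (1 : Matrix (Fin n) (Fin n) ℂ)))
    (Zh : Matrix (Fin n) (Fin p) ℂ)
    (hZh : Zh = (Aᴴ - s • (1 : Matrix (Fin n) (Fin n) ℂ))⁻¹ * R) :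
    Aᴴ * (X + (2 * s.re : ℂ) • (Zh * Zhᴴ)) + (X + (2 * s.re : ℂ) • (Zh * Zhᴴ)) * A +
        Cᴴ * C =
      (R + (2 * s.re : ℂ) • Zh) * (R + (2 * s.re : ℂ) • Zh)ᴴ :=
  stmt16_general n p A C X R hres s hunit Zh hZh
end

section
/- Let A ∈ ℝ^{n×n}, R ∈ ℝ^{n×p}, and let μ = a + i·b ∈ ℂ with a, b ∈ ℝ, b ≠ 0, be such that Aᵀ − μ·I_n is invertible (over ℂ). Set W = (Aᵀ − μ·I_n)^{-1}·R ∈ ℂ^{n×p} and let Re(W), Im(W) ∈ ℝ^{n×p} denote its entrywise real and imaginary parts. Then Aᵀ·Re(W) = R + a·Re(W) − b·Im(W) and Aᵀ·Im(W) = b·Re(W) + a·Im(W); equivalently, Aᵀ·[Re(W) Im(W)] = [R 0] + [Re(W) Im(W)]·[[a·I_p, b·I_p], [−b·I_p, a·I_p]], so the Krylov basis can be expanded by the real blocks Re(W) and Im(W) for the pair of complex conjugate shifts μ, μ̄. -/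
open Matrix

/-! The solve `(Aᵀ − μI) W = R` says `Aᵀ W = R + μ W`. Since `A` and `R` are real, the real and
imaginary parts of this identity are the two block equations, and multiplication by
`μ = a + ib` on `Re W + i Im W` is the rotation block `[[aI, bI], [−bI, aI]]` acting on
`[Re W  Im W]`. -/

section Realification

variable {m n p : Type*}

theorem Matrix.map_re_smul (μ : ℂ) (W : Matrix n p ℂ) :
    (μ • W).map Complex.re = μ.re • W.map Complex.re - μ.im • W.map Complex.im := by
  ext i j
  simp

theorem Matrix.map_im_smul (μ : ℂ) (W : Matrix n p ℂ) :
    (μ • W).map Complex.im = μ.im • W.map Complex.re + μ.re • W.map Complex.im := by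
  ext i j
  simp [add_comm]

theorem Matrix.map_re_ofReal (R : Matrix n p ℝ) : (R.map Complex.ofReal).map Complex.re = R := by
  ext i j
  simp

theorem Matrix.map_im_ofReal (R : Matrix n p ℝ) : (R.map Complex.ofReal).map Complex.im = 0 := by
  ext i j
  simp

variable [Fintype n]

theorem Matrix.map_re_ofReal_mul (B : Matrix m n ℝ) (W : Matrix n p ℂ) :
    (B.map Complex.ofReal * W).map Complex.re = B * W.map Complex.re := by
  ext i j
  simp [mul_apply, Complex.re_sum]

theorem Matrix.map_im_ofReal_mul (B : Matrix m n ℝ) (W : Matrix n p ℂ) :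
    (B.map Complex.ofReal * W).map Complex.im = B * W.map Complex.im := by
  ext i j
  simp [mul_apply, Complex.im_sum]

theorem Matrix.mul_map_re_of_mul_eq_add_smul {B : Matrix n n ℝ} {R : Matrix n p ℝ}
    {W : Matrix n p ℂ} {μ : ℂ} (h : B.map Complex.ofReal * W = R.map Complex.ofReal + μ • W) :
    B * W.map Complex.re = R + μ.re • W.map Complex.re - μ.im • W.map Complex.im := by
  have := congrArg (Matrix.map · Complex.re) h
  simp only [map_re_ofReal_mul, Matrix.map_add _ Complex.add_re, map_re_ofReal,
    map_re_smul] at this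
  rw [this, add_sub_assoc]

theorem Matrix.mul_map_im_of_mul_eq_add_smul {B : Matrix n n ℝ} {R : Matrix n p ℝ}
    {W : Matrix n p ℂ} {μ : ℂ} (h : B.map Complex.ofReal * W = R.map Complex.ofReal + μ • W) :
    B * W.map Complex.im = μ.im • W.map Complex.re + μ.re • W.map Complex.im := by
  have := congrArg (Matrix.map · Complex.im) h
  simp only [map_im_ofReal_mul, Matrix.map_add _ Complex.add_im, map_im_ofReal,
    map_im_smul, zero_add] at this
  exact this

end Realification

theorem Matrix.mul_fromCols_eq_of_rotation {α n p : Type*} [CommRing α] [Fintype n] [Fintype p]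
    [DecidableEq p] {B : Matrix n n α} {R X Y : Matrix n p α} {a b : α}
    (hX : B * X = R + a • X - b • Y) (hY : B * Y = b • X + a • Y) :
    B * fromCols X Y = fromCols R 0 + fromCols X Y *
      fromBlocks (a • (1 : Matrix p p α)) (b • (1 : Matrix p p α)) ((-b) • (1 : Matrix p p α))
        (a • (1 : Matrix p p α)) := by
  rw [mul_fromCols, fromCols_mul_fromBlocks, hX, hY]
  ext i (j | j) <;> simp [add_assoc, add_comm, sub_eq_add_neg]

theorem stmt18_general (n p : ℕ)
    (A : Matrix (Fin n) (Fin n) ℝ) (R : Matrix (Fin n) (Fin p) ℝ)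
    (a b : ℝ)
    (hunit : IsUnit ((A.map (Complex.ofReal))ᵀ -
      ((a : ℂ) + (b : ℂ) * Complex.I) • (1 : Matrix (Fin n) (Fin n) ℂ)))
    (W : Matrix (Fin n) (Fin p) ℂ)
    (hW : W = ((A.map (Complex.ofReal))ᵀ -
      ((a : ℂ) + (b : ℂ) * Complex.I) • (1 : Matrix (Fin n) (Fin n) ℂ))⁻¹ *
        R.map (Complex.ofReal)) :
    Aᵀ * W.map Complex.re =
      R + a • W.map Complex.re - b • W.map Complex.im ∧
    Aᵀ * W.map Complex.im =
      b • W.map Complex.re + a • W.map Complex.im ∧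
    Aᵀ * fromCols (W.map Complex.re) (W.map Complex.im) =
      fromCols R 0 +
        fromCols (W.map Complex.re) (W.map Complex.im) *
          fromBlocks (a • (1 : Matrix (Fin p) (Fin p) ℝ))
            (b • (1 : Matrix (Fin p) (Fin p) ℝ))
            ((-b) • (1 : Matrix (Fin p) (Fin p) ℝ))
            (a • (1 : Matrix (Fin p) (Fin p) ℝ)) := by
  set μ : ℂ := (a : ℂ) + (b : ℂ) * Complex.I
  have hμ : μ.re = a ∧ μ.im = b := by simp [μ]
  have hsolve : (Aᵀ.map Complex.ofReal - μ • 1) * W = R.map Complex.ofReal := by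
    rw [hW, ← transpose_map]
    exact mul_nonsing_inv_cancel_left _ _ ((isUnit_iff_isUnit_det _).mp hunit)
  have hshift : Aᵀ.map Complex.ofReal * W = R.map Complex.ofReal + μ • W := by
    rw [← hsolve, Matrix.sub_mul, Matrix.smul_mul, Matrix.one_mul, sub_add_cancel]
  have hre := mul_map_re_of_mul_eq_add_smul hshift
  have him := mul_map_im_of_mul_eq_add_smul hshift
  rw [hμ.1, hμ.2] at hre him
  exact ⟨hre, him, mul_fromCols_eq_of_rotation hre him⟩

/-- Realification: for real `A`, `R` and a complex shift `μ = a + ib` with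
`b ≠ 0`, the (complex) solve `W = (Aᵀ − μI)⁻¹R` yields real blocks `Re W`,
`Im W` that expand the Krylov basis:
`Aᵀ·[Re W  Im W] = [R  0] + [Re W  Im W]·[[aI, bI], [−bI, aI]]`. -/
theorem stmt18 (n p : ℕ)
    (A : Matrix (Fin n) (Fin n) ℝ) (R : Matrix (Fin n) (Fin p) ℝ)
    (a b : ℝ) (hb : b ≠ 0)
    (hunit : IsUnit ((A.map (Complex.ofReal))ᵀ -
      ((a : ℂ) + (b : ℂ) * Complex.I) • (1 : Matrix (Fin n) (Fin n) ℂ)))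
    (W : Matrix (Fin n) (Fin p) ℂ)
    (hW : W = ((A.map (Complex.ofReal))ᵀ -
      ((a : ℂ) + (b : ℂ) * Complex.I) • (1 : Matrix (Fin n) (Fin n) ℂ))⁻¹ *
        R.map (Complex.ofReal)) :
    Aᵀ * W.map Complex.re =
      R + a • W.map Complex.re - b • W.map Complex.im ∧
    Aᵀ * W.map Complex.im =
      b • W.map Complex.re + a • W.map Complex.im ∧
    Aᵀ * fromCols (W.map Complex.re) (W.map Complex.im) =
      fromCols R 0 +
        fromCols (W.map Complex.re) (W.map Complex.im) *
          fromBlocks (a • (1 : Matrix (Fin p) (Fin p) ℝ))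
            (b • (1 : Matrix (Fin p) (Fin p) ℝ))
            ((-b) • (1 : Matrix (Fin p) (Fin p) ℝ))
            (a • (1 : Matrix (Fin p) (Fin p) ℝ)) :=
  stmt18_general n p A R a b hunit W hW
end
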